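/- arXiv:1907.04686 — 9 statements merged into one kernel-verified Lean document; each statement's English description precedes it below -/
import Mathlib

section
/- Work in the polynomial ring P = (ℤ/2ℤ)[t₁, t₂] (e.g. MvPolynomial (Fin 2) (ZMod 2)). For each i ∈ ℕ let Sᵢ ∈ P be the i-th coefficient of the 2-typical Witt vector τ(t₁ + t₂) − τ(t₂) ∈ W(P). Then for every i: (a) Sᵢ is a homogeneous polynomial of degree 2^i, and (b) Sᵢ ≡ t₁ · t₂^(2^i − 1) modulo the ideal generated by t₁². -/
open MvPolynomial

private abbrev Bw : Type := MvPolynomial (Fin 2) ℤ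

private noncomputable def Tw (n : ℕ) : Bw :=
  (WittVector.teichmuller 2 (X 0 + X 1) -
    WittVector.teichmuller 2 (X 1) : WittVector 2 Bw).coeff n

private lemma ghost_Tw (n : ℕ) :
    ∑ k ∈ Finset.range (n + 1), (2 : Bw) ^ k * Tw k ^ 2 ^ (n - k) =
      (X 0 + X 1 : Bw) ^ 2 ^ n - (X 1 : Bw) ^ 2 ^ n := by
  have h1 : WittVector.ghostComponent (p := 2) n
      (WittVector.teichmuller 2 (X 0 + X 1) - WittVector.teichmuller 2 (X 1) : WittVector 2 Bw)
      = (X 0 + X 1 : Bw) ^ 2 ^ n - (X 1 : Bw) ^ 2 ^ n := by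
    rw [map_sub, WittVector.ghostComponent_teichmuller, WittVector.ghostComponent_teichmuller]
  rw [WittVector.ghostComponent_apply, aeval_wittPolynomial] at h1
  rw [← h1]
  refine Finset.sum_congr rfl fun k _ => ?_
  rw [Tw]
  push_cast
  ring

private lemma Tw_rec (n : ℕ) :
    (2 : Bw) ^ n * Tw n =
      (X 0 + X 1 : Bw) ^ 2 ^ n - (X 1 : Bw) ^ 2 ^ n -
        ∑ k ∈ Finset.range n, (2 : Bw) ^ k * Tw k ^ 2 ^ (n - k) := by
  have h := ghost_Tw n
  rw [Finset.sum_range_succ] at h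
  have hn : 2 ^ (n - n) = 1 := by simp
  rw [hn, pow_one] at h
  linear_combination h

private lemma isHomog_of_two_pow_mul {q : Bw} {m d : ℕ}
    (h : ((2 : Bw) ^ m * q).IsHomogeneous d) : q.IsHomogeneous d := by
  intro e he
  refine h ?_
  have h2 : (2 : Bw) ^ m * q = C ((2 : ℤ) ^ m) * q := by
    rw [map_pow, map_ofNat]
  rw [h2, coeff_C_mul]
  exact mul_ne_zero (by positivity) he

private lemma Tw_isHomogeneous (n : ℕ) : (Tw n).IsHomogeneous (2 ^ n) := by
  induction n using Nat.strong_induction_on with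
  | _ n ih =>
    apply isHomog_of_two_pow_mul (m := n)
    rw [Tw_rec]
    refine IsHomogeneous.sub (IsHomogeneous.sub ?_ ?_) ?_
    · simpa using ((isHomogeneous_X ℤ (0 : Fin 2)).add (isHomogeneous_X ℤ 1)).pow (2 ^ n)
    · simpa using (isHomogeneous_X ℤ (1 : Fin 2)).pow (2 ^ n)
    · refine IsHomogeneous.sum _ _ _ fun k hk => ?_
      have hk' := Finset.mem_range.mp hk
      have hdeg : 2 ^ k * 2 ^ (n - k) = 2 ^ n := by
        rw [← pow_add]; congr 1; omega
      have h1 := (ih k hk').pow (2 ^ (n - k))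
      rw [hdeg] at h1
      have h2 : (2 : Bw) ^ k * Tw k ^ 2 ^ (n - k) = C ((2 : ℤ) ^ k) * Tw k ^ 2 ^ (n - k) := by
        rw [map_pow, map_ofNat]
      rw [h2]
      exact h1.C_mul _

private lemma sq_zero_add_pow {R : Type*} [CommRing R] (x y : R) (hx : x ^ 2 = 0) :
    ∀ m : ℕ, (x + y) ^ (m + 1) = y ^ (m + 1) + ((m : R) + 1) * x * y ^ m := by
  intro m
  induction m with
  | zero => push_cast; ring
  | succ m ih =>
    have h : (x + y) ^ (m + 1 + 1) = (x + y) ^ (m + 1) * (x + y) := by ring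
    rw [h, ih]
    push_cast
    linear_combination ((m : R) + 1) * y ^ m * hx

private lemma X0_prime : Prime (X 0 : Bw) := by
  have h : Prime ((finSuccEquiv ℤ 1) (X 0 : Bw)) := by
    rw [finSuccEquiv_X_zero]; exact Polynomial.prime_X
  exact (MulEquiv.prime_iff (finSuccEquiv ℤ 1).toMulEquiv).mp h

private lemma cancel_mem {x : Bw} (m : ℕ)
    (h : (2 : Bw) ^ m * x ∈ Ideal.span {(X 0 : Bw) ^ 2}) :
    x ∈ Ideal.span {(X 0 : Bw) ^ 2} := by
  rw [Ideal.mem_span_singleton] at h ⊢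
  refine X0_prime.pow_dvd_of_dvd_mul_left _ ?_ h
  rintro ⟨c, hc⟩
  have h0 := congrArg (constantCoeff (σ := Fin 2) (R := ℤ)) hc
  simp [constantCoeff_X, map_ofNat] at h0

private lemma Tw_sub_mem (n : ℕ) :
    Tw n - X 0 * X 1 ^ (2 ^ n - 1) ∈ Ideal.span {(X 0 : Bw) ^ 2} := by
  induction n using Nat.strong_induction_on with
  | _ n ih =>
    refine cancel_mem n ?_
    rw [← Ideal.Quotient.eq_zero_iff_mem]
    set I : Ideal Bw := Ideal.span {(X 0 : Bw) ^ 2} with hI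
    set π : Bw →+* Bw ⧸ I := Ideal.Quotient.mk I with hπ
    have hx : (π (X 0)) ^ 2 = 0 := by
      rw [← map_pow, hπ, Ideal.Quotient.eq_zero_iff_mem, hI]
      exact Ideal.subset_span rfl
    have hpow : ∀ e : ℕ, 2 ≤ e → (π (X 0)) ^ e = 0 := by
      intro e he
      calc (π (X 0)) ^ e = (π (X 0)) ^ 2 * (π (X 0)) ^ (e - 2) := by
            rw [← pow_add]; congr 1; omega
        _ = 0 := by rw [hx, zero_mul]
    have h2n : 2 ^ n - 1 + 1 = 2 ^ n := by
      have : 0 < 2 ^ n := by positivity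
      omega
    have hbin : (π (X 0) + π (X 1)) ^ 2 ^ n
        = (π (X 1)) ^ 2 ^ n + (2 : Bw ⧸ I) ^ n * π (X 0) * (π (X 1)) ^ (2 ^ n - 1) := by
      have hb := sq_zero_add_pow (π (X 0)) (π (X 1)) hx (2 ^ n - 1)
      rw [h2n] at hb
      rw [hb]
      have : ((2 ^ n - 1 : ℕ) : Bw ⧸ I) + 1 = (2 : Bw ⧸ I) ^ n := by
        have : ((2 ^ n - 1 : ℕ) : Bw ⧸ I) + 1 = ((2 ^ n - 1 + 1 : ℕ) : Bw ⧸ I) := by push_cast; ring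
        rw [this, h2n]
        push_cast
        ring
      rw [this]
    have hrec := congrArg π (Tw_rec n)
    simp only [map_mul, map_sub, map_add, map_pow, map_ofNat, map_sum] at hrec
    have hsum : ∀ k ∈ Finset.range n,
        (2 : Bw ⧸ I) ^ k * (π (Tw k)) ^ 2 ^ (n - k) = 0 := by
      intro k hk
      have hk' := Finset.mem_range.mp hk
      have hTk : π (Tw k) = π (X 0) * (π (X 1)) ^ (2 ^ k - 1) := by
        have hm := ih k hk'
        rw [← Ideal.Quotient.eq_zero_iff_mem, ← hπ, map_sub, sub_eq_zero, map_mul,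
          map_pow] at hm
        exact hm
      have h2e : 2 ≤ 2 ^ (n - k) := by
        calc 2 = 2 ^ 1 := (pow_one 2).symm
          _ ≤ 2 ^ (n - k) := Nat.pow_le_pow_right (by norm_num) (by omega)
      rw [hTk, mul_pow, hpow _ h2e]
      ring
    rw [Finset.sum_eq_zero hsum, hbin] at hrec
    simp only [map_mul, map_sub, map_pow, map_ofNat]
    linear_combination hrec

/-- In `P = (ℤ/2ℤ)[t₁,t₂]`, let `Sᵢ` be the `i`-th coefficient of the 2-typical Witt
vector `τ(t₁ + t₂) − τ(t₂)`.  Then `Sᵢ` is homogeneous of degree `2^i` and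
`Sᵢ ≡ t₁ · t₂^(2^i − 1)` modulo the ideal `(t₁²)`. -/
theorem witt_subtraction_coeffs_char_two (i : ℕ)
    (t₁ t₂ : MvPolynomial (Fin 2) (ZMod 2)) (ht₁ : t₁ = X 0) (ht₂ : t₂ = X 1)
    (S : ℕ → MvPolynomial (Fin 2) (ZMod 2))
    (hS : ∀ i, S i =
      (WittVector.teichmuller 2 (t₁ + t₂) - WittVector.teichmuller 2 t₂).coeff i) :
    (S i).IsHomogeneous (2 ^ i) ∧
      S i - t₁ * t₂ ^ (2 ^ i - 1) ∈ Ideal.span {t₁ ^ 2} := by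
  subst ht₁ ht₂
  set ρ : Bw →+* MvPolynomial (Fin 2) (ZMod 2) :=
    MvPolynomial.map (Int.castRingHom (ZMod 2)) with hρ
  have hmap : S i = ρ (Tw i) := by
    rw [hS i]
    have hnat : (WittVector.map (p := 2) ρ)
        (WittVector.teichmuller 2 (X 0 + X 1) - WittVector.teichmuller 2 (X 1) : WittVector 2 Bw)
        = WittVector.teichmuller 2 ((X 0 : MvPolynomial (Fin 2) (ZMod 2)) + X 1) -
          WittVector.teichmuller 2 (X 1) := by
      rw [map_sub, WittVector.map_teichmuller, WittVector.map_teichmuller]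
      simp [hρ]
    rw [← hnat, WittVector.map_coeff]
    rfl
  constructor
  · rw [hmap]
    exact (Tw_isHomogeneous i).map _
  · rw [hmap]
    have hmem := Tw_sub_mem i
    rw [Ideal.mem_span_singleton] at hmem ⊢
    obtain ⟨c, hc⟩ := hmem
    refine ⟨ρ c, ?_⟩
    have := congrArg ρ hc
    rw [map_sub, map_mul, map_mul, map_pow, map_pow] at this
    simp only [hρ, MvPolynomial.map_X] at this ⊢
    linear_combination this
end

section
/- Let A be a commutative ring of characteristic 2 and a, b ∈ A. Set w = τ(a + b) − τ(a) − τ(b) ∈ W(A) (2-typical Witt vectors). Then w.coeff 0 = 0, w.coeff 1 = a·b, w.coeff 2 = a·b·(a² + a·b + b²), and w.coeff 3 = a·b·(a⁶ + a⁵·b + a³·b³ + a·b⁵ + b⁶). (This is the identity (a+b,0,0,0) − (a,0,0,0) − (b,0,0,0) = (0, ab, ab(a²+ab+b²), ab(a⁶+a⁵b+a³b³+ab⁵+b⁶)) in W₄(A).) -/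
/-!
Every coefficient of `τ(a + b) - τ(a) - τ(b)` is an integer polynomial in `a` and `b`, so it
suffices to compute in `ℤ[X₀, X₁]`. There the ghost components are `(a + b)^(2^n) - a^(2^n) - b^(2^n)`,
and since `2` is a non-zero-divisor the coefficients can be solved for one at a time from
`w₀^(2^n) + 2 w₁^(2^(n-1)) + ⋯ + 2^n wₙ`. Only the coefficient of index `3` needs
characteristic `2`, to reduce the integer coefficients of its universal formula.
-/

open MvPolynomial Finset WittVector

namespace WittVector

variable {p : ℕ} [Fact p.Prime] {A : Type*} [CommRing A]

theorem ghostComponent_eq_sum (n : ℕ) (x : WittVector p A) :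
    ghostComponent n x = ∑ i ∈ range (n + 1), (p : A) ^ i * x.coeff i ^ p ^ (n - i) := by
  rw [ghostComponent_apply, aeval_wittPolynomial]

variable (p)

theorem ghostComponent_teichmuller_add_sub_sub (a b : A) (n : ℕ) :
    ghostComponent n (teichmuller p (a + b) - teichmuller p a - teichmuller p b) =
      (a + b) ^ p ^ n - a ^ p ^ n - b ^ p ^ n := by
  simp only [map_sub, ghostComponent_teichmuller]

theorem coeff_zero_teichmuller_add_sub_sub (a b : A) :
    (teichmuller p (a + b) - teichmuller p a - teichmuller p b).coeff 0 = 0 := by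
  simpa [ghostComponent_eq_sum] using ghostComponent_teichmuller_add_sub_sub p a b 0

local notation "τ" => teichmuller 2

theorem coeff_one_teichmuller_add_sub_sub_of_isLeftRegular (h2 : IsLeftRegular (2 : A))
    (a b : A) : (τ (a + b) - τ a - τ b).coeff 1 = a * b := by
  have h := ghostComponent_teichmuller_add_sub_sub 2 a b 1
  simp only [ghostComponent_eq_sum, sum_range_succ, sum_range_zero,
    coeff_zero_teichmuller_add_sub_sub] at h
  apply h2
  linear_combination h

theorem coeff_two_teichmuller_add_sub_sub_of_isLeftRegular (h2 : IsLeftRegular (2 : A))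
    (a b : A) : (τ (a + b) - τ a - τ b).coeff 2 = a * b * (a ^ 2 + a * b + b ^ 2) := by
  have h := ghostComponent_teichmuller_add_sub_sub 2 a b 2
  simp only [ghostComponent_eq_sum, sum_range_succ, sum_range_zero,
    coeff_zero_teichmuller_add_sub_sub, coeff_one_teichmuller_add_sub_sub_of_isLeftRegular h2] at h
  apply h2.pow 2
  linear_combination h

theorem coeff_three_teichmuller_add_sub_sub_of_isLeftRegular (h2 : IsLeftRegular (2 : A))
    (a b : A) : (τ (a + b) - τ a - τ b).coeff 3 =
      a * b * (a ^ 6 + 3 * a ^ 5 * b + 6 * a ^ 4 * b ^ 2 + 7 * a ^ 3 * b ^ 3 +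
        6 * a ^ 2 * b ^ 4 + 3 * a * b ^ 5 + b ^ 6) := by
  have h := ghostComponent_teichmuller_add_sub_sub 2 a b 3
  simp only [ghostComponent_eq_sum, sum_range_succ, sum_range_zero,
    coeff_zero_teichmuller_add_sub_sub, coeff_one_teichmuller_add_sub_sub_of_isLeftRegular h2,
    coeff_two_teichmuller_add_sub_sub_of_isLeftRegular h2] at h
  apply h2.pow 3
  linear_combination h

theorem coeff_teichmuller_add_sub_sub_eq_aeval (a b : A) (n : ℕ) :
    (τ (a + b) - τ a - τ b).coeff n = aeval ![a, b]
      ((τ (X 0 + X 1) - τ (X 0) - τ (X 1) : WittVector 2 (MvPolynomial (Fin 2) ℤ)).coeff n) := by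
  rw [← RingHom.coe_coe (aeval ![a, b]), ← map_coeff]
  simp [map_teichmuller]

theorem isLeftRegular_two_mvPolynomial_int (σ : Type*) : IsLeftRegular (2 : MvPolynomial σ ℤ) :=
  (IsRegular.of_ne_zero two_ne_zero).left

theorem coeff_one_teichmuller_add_sub_sub (a b : A) : (τ (a + b) - τ a - τ b).coeff 1 = a * b := by
  rw [coeff_teichmuller_add_sub_sub_eq_aeval,
    coeff_one_teichmuller_add_sub_sub_of_isLeftRegular (isLeftRegular_two_mvPolynomial_int _)]
  simp

theorem coeff_two_teichmuller_add_sub_sub (a b : A) :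
    (τ (a + b) - τ a - τ b).coeff 2 = a * b * (a ^ 2 + a * b + b ^ 2) := by
  rw [coeff_teichmuller_add_sub_sub_eq_aeval,
    coeff_two_teichmuller_add_sub_sub_of_isLeftRegular (isLeftRegular_two_mvPolynomial_int _)]
  simp

theorem coeff_three_teichmuller_add_sub_sub (a b : A) : (τ (a + b) - τ a - τ b).coeff 3 =
    a * b * (a ^ 6 + 3 * a ^ 5 * b + 6 * a ^ 4 * b ^ 2 + 7 * a ^ 3 * b ^ 3 +
      6 * a ^ 2 * b ^ 4 + 3 * a * b ^ 5 + b ^ 6) := by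
  rw [coeff_teichmuller_add_sub_sub_eq_aeval,
    coeff_three_teichmuller_add_sub_sub_of_isLeftRegular (isLeftRegular_two_mvPolynomial_int _)]
  simp

end WittVector

/-- In `W₄(A)` for `A` of characteristic 2:
`(a+b,0,0,0) − (a,0,0,0) − (b,0,0,0)
  = (0, ab, ab(a²+ab+b²), ab(a⁶+a⁵b+a³b³+ab⁵+b⁶))`. -/
theorem witt_teichmuller_sub_char_two (A : Type*) [CommRing A] [CharP A 2] (a b : A)
    (w : WittVector 2 A)
    (hw : w = WittVector.teichmuller 2 (a + b) - WittVector.teichmuller 2 a -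
      WittVector.teichmuller 2 b) :
    w.coeff 0 = 0 ∧ w.coeff 1 = a * b ∧
      w.coeff 2 = a * b * (a ^ 2 + a * b + b ^ 2) ∧
      w.coeff 3 = a * b * (a ^ 6 + a ^ 5 * b + a ^ 3 * b ^ 3 + a * b ^ 5 + b ^ 6) := by
  have h2 : (2 : A) = 0 := CharTwo.two_eq_zero
  subst hw
  refine ⟨coeff_zero_teichmuller_add_sub_sub 2 a b, coeff_one_teichmuller_add_sub_sub a b,
    coeff_two_teichmuller_add_sub_sub a b, ?_⟩
  rw [coeff_three_teichmuller_add_sub_sub]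
  linear_combination a * b * (a ^ 5 * b + 3 * a ^ 4 * b ^ 2 + 3 * a ^ 3 * b ^ 3 +
    3 * a ^ 2 * b ^ 4 + a * b ^ 5) * h2
end

section
/- Let p be a prime, A a commutative ring of characteristic p, n ≥ 1, and b₁, …, b_N ∈ Wₙ(A) truncated Witt vectors of length n. If the images of b₁, …, b_N under the natural projection Wₙ(A) → A (given by the 0-th Witt coefficient, which is a ring homomorphism, corresponding to the restriction R^{n−1} : Wₙ(A) → W₁(A) ≅ A) form a regular sequence in A, then b₁, …, b_N form a regular sequence in Wₙ(A). In particular, the Teichmüller lifts of a regular sequence of A form a regular sequence of Wₙ(A). -/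
/-!
The kernels `I_k` of the truncations `Wₙ(A) → W_k(A)` filter `Wₙ(A)` from `I_0 = Wₙ(A)` down to
`I_n = 0`. Every element of `I_k` is `V^k y`, and the `k`-th coefficient identifies `I_k / I_{k+1}`
with `A`; since `b * V^k y = V^k (F^k b * y)` in characteristic `p`, an element `b` acts on this
graded piece as multiplication by `b₀ ^ p ^ k`. Powers of a regular sequence are regular, so the
`bᵢ` form a weakly regular sequence on every graded piece, hence on `Wₙ(A)` by extension.
The ideal they generate is proper because its image in `A` under `b ↦ b₀` is.
-/

open Function Pointwise RingTheory.Sequence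

namespace RingTheory.Sequence

open Submodule

variable {R : Type*} [CommRing R] {M : Type*} [AddCommGroup M] [Module R M]

variable (M) in
lemma IsWeaklyRegular.of_subsingleton [Subsingleton M] (rs : List R) : IsWeaklyRegular M rs := by
  induction rs generalizing M with
  | nil => exact .nil R M
  | cons r rs ih =>
    have : Subsingleton (QuotSMulTop r M) := (mkQ_surjective _).subsingleton
    exact .cons (fun _ _ _ ↦ Subsingleton.elim _ _) (ih _)

lemma IsWeaklyRegular.of_exact {rs : List R} {M₁ M₂ M₃ : Type*}
    [AddCommGroup M₁] [Module R M₁] [AddCommGroup M₂] [Module R M₂]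
    [AddCommGroup M₃] [Module R M₃] {f : M₁ →ₗ[R] M₂} {g : M₂ →ₗ[R] M₃}
    (hf : Injective f) (hg : Surjective g) (hfg : Exact f g)
    (h₁ : IsWeaklyRegular M₁ rs) (h₃ : IsWeaklyRegular M₃ rs) : IsWeaklyRegular M₂ rs := by
  induction rs generalizing M₁ M₂ M₃ with
  | nil => exact .nil R M₂
  | cons r rs ih =>
    rw [isWeaklyRegular_cons_iff] at h₁ h₃
    -- snake lemma: `r` being regular on `M₃` keeps `f` injective modulo `r`
    have hf' : Injective (QuotSMulTop.map r f) := by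
      have := QuotSMulTop.map_first_exact_on_four_term_exact_of_isSMulRegular_last
        ((LinearMap.exact_zero_iff_injective M₁ f).mpr hf) hfg h₃.1
      rwa [map_zero, LinearMap.exact_zero_iff_injective] at this
    exact .cons (isSMulRegular_of_range_eq_ker hf hfg.linearMap_ker_eq.symm h₁.1 h₃.1)
      (ih hf' (QuotSMulTop.map_surjective r hg) (QuotSMulTop.map_exact r hfg hg) h₁.2 h₃.2)

lemma isWeaklyRegular_quotSMulTop_mul {rs : List R} {s t : R} (ht : IsSMulRegular M t)
    (hs : IsWeaklyRegular (QuotSMulTop s M) rs) (ht' : IsWeaklyRegular (QuotSMulTop t M) rs) :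
    IsWeaklyRegular (QuotSMulTop (s * t) M) rs := by
  -- the short exact sequence `0 → M/sM --t--> M/stM → M/tM → 0`
  have mem_smul_top {r : R} {x : M} : x ∈ r • (⊤ : Submodule R M) ↔ ∃ y, r • y = x := by
    simp [mem_smul_pointwise_iff_exists]
  have hf : s • (⊤ : Submodule R M) ≤
      ((s * t) • ⊤ : Submodule R M).comap (LinearMap.lsmul R M t) :=
    fun x ⟨y, _, hy⟩ ↦ ⟨y, trivial, by simp [← hy, mul_smul, smul_comm s t]⟩
  have hg : ((s * t) • ⊤ : Submodule R M) ≤ t • ⊤ :=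
    fun x ⟨y, _, hy⟩ ↦ ⟨s • y, trivial, by simp [← hy, mul_smul, smul_comm s t]⟩
  refine IsWeaklyRegular.of_exact (f := mapQ _ _ _ hf) (g := factor hg) ?_ (factor_surjective hg)
    ?_ hs ht'
  · rw [← LinearMap.ker_eq_bot, eq_bot_iff]
    rintro ⟨x⟩ hx
    obtain ⟨y, hy⟩ := mem_smul_top.mp ((Quotient.mk_eq_zero _).mp hx)
    simp only [mul_comm s, mul_smul] at hy
    exact (Quotient.mk_eq_zero _).mpr (mem_smul_top.mpr ⟨y, ht hy⟩)
  · intro z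
    obtain ⟨x, rfl⟩ := mkQ_surjective _ z
    constructor
    · intro hx
      obtain ⟨y, rfl⟩ := mem_smul_top.mp ((Quotient.mk_eq_zero _).mp hx)
      exact ⟨mkQ _ y, rfl⟩
    · rintro ⟨y, hy⟩
      obtain ⟨y, rfl⟩ := mkQ_surjective _ y
      rw [← hy]
      exact (Quotient.mk_eq_zero _).mpr (mem_smul_top.mpr ⟨y, rfl⟩)

lemma isWeaklyRegular_quotSMulTop_pow {rs : List R} {r : R} (hr : IsSMulRegular M r)
    (h : IsWeaklyRegular (QuotSMulTop r M) rs) (e : ℕ) :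
    IsWeaklyRegular (QuotSMulTop (r ^ e) M) rs := by
  induction e with
  | zero =>
    have : Subsingleton (QuotSMulTop (r ^ 0) M) :=
      Submodule.Quotient.subsingleton_iff.mpr (by rw [pow_zero, one_smul])
    exact .of_subsingleton _ rs
  | succ e ih => rw [pow_succ]; exact isWeaklyRegular_quotSMulTop_mul hr ih h

lemma IsWeaklyRegular.map_pow {rs : List R} (h : IsWeaklyRegular M rs) (e : ℕ) :
    IsWeaklyRegular M (rs.map (· ^ e)) := by
  induction rs generalizing M with
  | nil => exact .nil R M
  | cons r rs ih =>
    rw [isWeaklyRegular_cons_iff] at h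
    exact .cons (h.1.pow e) (isWeaklyRegular_quotSMulTop_pow h.1 (ih h.2) e)

lemma IsWeaklyRegular.isRegular_of_isRegular_map {S : Type*} [CommRing S] {rs : List R}
    (h : IsWeaklyRegular R rs) (f : R →+* S) (hf : IsRegular S (rs.map f)) : IsRegular R rs :=
  ⟨h, fun htop ↦ hf.top_ne_smul (by
    rw [smul_eq_mul, Ideal.mul_top] at htop ⊢
    rw [← Ideal.map_ofList, ← htop, Ideal.map_top])⟩

end RingTheory.Sequence

namespace WittVector

variable {p : ℕ} [Fact p.Prime] {R : Type*} [CommRing R]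

lemma iterate_verschiebung_mem_ker_truncate (k : ℕ) (y : WittVector p R) :
    verschiebung^[k] y ∈ RingHom.ker (truncate (p := p) (R := R) k) :=
  (mem_ker_truncate _ _).mpr fun _ ↦ iterate_verschiebung_coeff_eq_zero _

end WittVector

namespace TruncatedWittVector

open WittVector (verschiebung)

variable {p : ℕ} [Fact p.Prime] {R : Type*} [CommRing R] {n k : ℕ}

local notation "𝕎" => WittVector p

noncomputable def constantCoeff (hn : 0 < n) : TruncatedWittVector p n R →+* R :=
  (WittVector.truncate n).liftOfSurjective (WittVector.truncate_surjective p n R)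
    ⟨WittVector.constantCoeff, fun x hx ↦ (WittVector.mem_ker_truncate _ x).mp hx 0 hn⟩

lemma constantCoeff_apply (hn : 0 < n) (x : TruncatedWittVector p n R) :
    constantCoeff hn x = x.coeff ⟨0, hn⟩ := by
  obtain ⟨x, rfl⟩ := WittVector.truncate_surjective p n R x
  rw [constantCoeff, RingHom.liftOfSurjective_comp_apply, WittVector.coeff_truncate]
  rfl

lemma ker_truncate_zero : RingHom.ker (truncate (p := p) (R := R) (Nat.zero_le n)) = ⊤ :=
  eq_top_iff.mpr fun _ _ ↦ RingHom.mem_ker.mpr (ext fun i ↦ i.elim0)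

lemma ker_truncate_le_ker_truncate {m : ℕ} (hkm : k ≤ m) (hm : m ≤ n) :
    RingHom.ker (truncate (p := p) (R := R) hm) ≤ RingHom.ker (truncate (hkm.trans hm)) :=
  fun x hx ↦ by rw [RingHom.mem_ker, ← truncate_truncate hkm hm, RingHom.mem_ker.mp hx, map_zero]

lemma mem_ker_truncate_iff (hk : k ≤ n) {x : TruncatedWittVector p n R} :
    x ∈ RingHom.ker (truncate (p := p) hk) ↔
      ∃ y : 𝕎 R, WittVector.truncate n (verschiebung^[k] y) = x := by
  constructor
  · obtain ⟨x, rfl⟩ := WittVector.truncate_surjective p n R x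
    rw [RingHom.mem_ker, truncate_wittVector_truncate, ← RingHom.mem_ker,
      WittVector.mem_ker_truncate]
    exact fun hx ↦ ⟨_, congrArg _ (WittVector.eq_iterate_verschiebung hx).symm⟩
  · rintro ⟨y, rfl⟩
    rw [RingHom.mem_ker, truncate_wittVector_truncate, ← RingHom.mem_ker]
    exact WittVector.iterate_verschiebung_mem_ker_truncate k y

lemma ker_truncate_self : RingHom.ker (truncate (p := p) (R := R) (le_refl n)) = ⊥ := by
  refine eq_bot_iff.mpr fun x hx ↦ ?_
  obtain ⟨y, rfl⟩ := (mem_ker_truncate_iff _).mp hx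
  exact RingHom.mem_ker.mp (WittVector.iterate_verschiebung_mem_ker_truncate n y)

lemma coeff_truncate_iterate_verschiebung (hk : k < n) (y : 𝕎 R) :
    (WittVector.truncate n (verschiebung^[k] y)).coeff ⟨k, hk⟩ = y.coeff 0 := by
  simpa using WittVector.iterate_verschiebung_coeff y k 0

lemma coeff_add_of_mem_ker_truncate (hk : k < n) {x y : TruncatedWittVector p n R}
    (hx : x ∈ RingHom.ker (truncate hk.le)) (hy : y ∈ RingHom.ker (truncate hk.le)) :
    (x + y).coeff ⟨k, hk⟩ = x.coeff ⟨k, hk⟩ + y.coeff ⟨k, hk⟩ := by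
  obtain ⟨x, rfl⟩ := (mem_ker_truncate_iff hk.le).mp hx
  obtain ⟨y, rfl⟩ := (mem_ker_truncate_iff hk.le).mp hy
  simp only [← map_add, ← iterate_map_add, coeff_truncate_iterate_verschiebung,
    WittVector.add_coeff_zero]

lemma coeff_mul_of_mem_ker_truncate [CharP R p] (hk : k < n) (b : TruncatedWittVector p n R)
    {x : TruncatedWittVector p n R} (hx : x ∈ RingHom.ker (truncate hk.le)) :
    (b * x).coeff ⟨k, hk⟩ = b.coeff ⟨0, k.zero_lt_of_lt hk⟩ ^ p ^ k * x.coeff ⟨k, hk⟩ := by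
  obtain ⟨x, rfl⟩ := (mem_ker_truncate_iff hk.le).mp hx
  obtain ⟨b, rfl⟩ := WittVector.truncate_surjective p n R b
  rw [coeff_truncate_iterate_verschiebung, ← map_mul, WittVector.coeff_truncate,
    WittVector.coeff_truncate]
  simpa using WittVector.iterate_verschiebung_mul_coeff b x 0 k

lemma mem_ker_truncate_succ_iff (hk : k < n) {x : TruncatedWittVector p n R}
    (hx : x ∈ RingHom.ker (truncate hk.le)) :
    x ∈ RingHom.ker (truncate (p := p) (show k + 1 ≤ n from hk)) ↔ x.coeff ⟨k, hk⟩ = 0 := by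
  constructor
  · intro hx'
    obtain ⟨y, rfl⟩ := (mem_ker_truncate_iff _).mp hx'
    rw [WittVector.coeff_truncate]
    exact WittVector.iterate_verschiebung_coeff_eq_zero y k.lt_succ_self
  · obtain ⟨y, rfl⟩ := (mem_ker_truncate_iff hk.le).mp hx
    rw [coeff_truncate_iterate_verschiebung]
    intro hy
    have : y = verschiebung^[1] (y.shift 1) :=
      WittVector.eq_iterate_verschiebung fun i hi ↦ by rwa [Nat.lt_one_iff.mp hi]
    rw [this, ← iterate_add_apply]
    exact (mem_ker_truncate_iff _).mpr ⟨_, rfl⟩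

lemma exists_mem_ker_truncate_coeff_eq (hk : k < n) (a : R) :
    ∃ x ∈ RingHom.ker (truncate (p := p) hk.le), x.coeff ⟨k, hk⟩ = a :=
  ⟨_, (mem_ker_truncate_iff hk.le).mpr ⟨WittVector.mk p fun _ ↦ a, rfl⟩,
    coeff_truncate_iterate_verschiebung hk _⟩

theorem isWeaklyRegular_ker_truncate [CharP R p] (hn : 0 < n)
    {bs : List (TruncatedWittVector p n R)} (hbs : IsWeaklyRegular R (bs.map (constantCoeff hn)))
    (hk : k ≤ n) : IsWeaklyRegular (RingHom.ker (truncate (p := p) (R := R) hk)) bs := by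
  induction hk using Nat.decreasingInduction with
  | self =>
    have := Submodule.subsingleton_iff_eq_bot.mpr (ker_truncate_self (p := p) (R := R) (n := n))
    exact .of_subsingleton _ bs
  | of_succ k hk ih =>
    let _ : Algebra (TruncatedWittVector p n R) R :=
      ((iterateFrobenius R p k).comp (constantCoeff hn)).toAlgebra
    let g : RingHom.ker (truncate (p := p) (R := R) hk.le) →ₗ[TruncatedWittVector p n R] R :=
      { toFun x := x.1.coeff ⟨k, hk⟩
        map_add' x y := coeff_add_of_mem_ker_truncate hk x.2 y.2
        map_smul' b x := by
          simp [coeff_mul_of_mem_ker_truncate hk b x.2, Algebra.smul_def,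
            RingHom.algebraMap_toAlgebra, constantCoeff_apply, iterateFrobenius_def] }
    refine ih.of_exact (f := Submodule.inclusion (ker_truncate_le_ker_truncate k.le_succ hk))
      (g := g) (Submodule.inclusion_injective _) ?_ ?_ ?_
    · intro a
      obtain ⟨x, hx, rfl⟩ := exists_mem_ker_truncate_coeff_eq (p := p) hk a
      exact ⟨⟨x, hx⟩, rfl⟩
    · intro x
      refine (mem_ker_truncate_succ_iff hk x.2).symm.trans ⟨fun h ↦ ⟨⟨x, h⟩, rfl⟩, ?_⟩
      rintro ⟨y, rfl⟩
      exact y.2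
    · refine (isWeaklyRegular_map_algebraMap_iff (S := R) (M := R) bs).mp ?_
      have hpow := hbs.map_pow (p ^ k)
      rwa [List.map_map] at hpow

end TruncatedWittVector

/-- Let `p` be a prime, `A` a commutative ring of characteristic `p`, `n ≥ 1`, and
`b₁, …, b_N ∈ Wₙ(A)`.  If the images of the `bᵢ` under the 0-th coefficient map
`Wₙ(A) → A` form a regular sequence in `A`, then `b₁, …, b_N` form a regular sequence
in `Wₙ(A)`. -/
theorem truncatedWittVector_regular_sequence
    (p : ℕ) [Fact p.Prime] (A : Type*) [CommRing A] [CharP A p]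
    (n : ℕ) (hn : 0 < n) (N : ℕ) (b : Fin N → TruncatedWittVector p n A)
    (hreg : RingTheory.Sequence.IsRegular A
      (List.ofFn fun i => (b i).coeff (⟨0, hn⟩ : Fin n))) :
    RingTheory.Sequence.IsRegular (TruncatedWittVector p n A) (List.ofFn b) := by
  have hmap : (List.ofFn b).map (TruncatedWittVector.constantCoeff hn) =
      List.ofFn fun i ↦ (b i).coeff ⟨0, hn⟩ := by
    simp [List.map_ofFn, comp_def, TruncatedWittVector.constantCoeff_apply]
  rw [← hmap] at hreg
  have hker := TruncatedWittVector.isWeaklyRegular_ker_truncate hn hreg.toIsWeaklyRegular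
    (Nat.zero_le n)
  exact (((LinearEquiv.ofTop _ TruncatedWittVector.ker_truncate_zero).isWeaklyRegular_congr _).mp
    hker).isRegular_of_isRegular_map _ hreg
end

section
/- Let p be a prime, A a commutative ring of characteristic p, x ∈ A, and n ≥ 1. Equip Wₙ(A[1/x]) with the Wₙ(A)-algebra structure given by the ring homomorphism induced functorially by the localization map A → A[1/x]. Then Wₙ(A[1/x]) is the localization of Wₙ(A) away from the Teichmüller lift τ(x): that is, IsLocalization.Away (τ(x)) (Wₙ(A[1/x])) holds, so Wₙ(A[1/x]) = Wₙ(A)[1/τ(x)]. -/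
section TeichmullerMul

open Function MvPolynomial WittVector

variable (p : ℕ) [hp : Fact p.Prime]

/-- Auxiliary: the coefficientwise multiplication by Teichmüller powers. -/
private def teichMulAux {R : Type*} [CommRing R] (c : R) (w : WittVector p R) :
    WittVector p R :=
  WittVector.mk p fun i => c ^ p ^ i * w.coeff i

private theorem teichMulAux_coeff {R : Type*} [CommRing R] (c : R) (w : WittVector p R)
    (i : ℕ) : (teichMulAux p c w).coeff i = c ^ p ^ i * w.coeff i :=
  rfl

private theorem ghostComponent_teichMulAux {R : Type*} [CommRing R] (c : R)
    (w : WittVector p R) (i : ℕ) :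
    WittVector.ghostComponent i (teichMulAux p c w)
      = c ^ p ^ i * WittVector.ghostComponent i w := by
  rw [ghostComponent_apply, ghostComponent_apply, aeval_wittPolynomial, aeval_wittPolynomial,
    Finset.mul_sum]
  refine Finset.sum_congr rfl fun j hj => ?_
  rw [Finset.mem_range, Nat.lt_succ_iff] at hj
  have hc : (c ^ p ^ j) ^ p ^ (i - j) = c ^ p ^ i := by
    rw [← pow_mul, ← pow_add, Nat.add_sub_cancel' hj]
  rw [teichMulAux_coeff, mul_pow, hc]
  ring

private theorem map_teichMulAux {R S : Type*} [CommRing R] [CommRing S] (f : R →+* S)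
    (c : R) (w : WittVector p R) :
    WittVector.map f (teichMulAux p c w) = teichMulAux p (f c) (WittVector.map f w) := by
  ext i
  simp only [WittVector.map_coeff, teichMulAux_coeff, map_mul, map_pow]

private theorem teichmuller_mul_eq_aux₁ {R : Type*} (c : MvPolynomial R ℚ)
    (w : WittVector p (MvPolynomial R ℚ)) :
    WittVector.teichmuller p c * w = teichMulAux p c w := by
  apply (ghostMap.bijective_of_invertible p (MvPolynomial R ℚ)).1
  ext1 i
  rw [RingHom.map_mul, Pi.mul_apply, ghostMap_apply, ghostMap_apply, ghostMap_apply,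
    ghostComponent_teichMulAux, ghostComponent_teichmuller]

private theorem teichmuller_mul_eq_aux₂ {R : Type*} (c : MvPolynomial R ℤ)
    (w : WittVector p (MvPolynomial R ℤ)) :
    WittVector.teichmuller p c * w = teichMulAux p c w := by
  refine WittVector.map_injective (MvPolynomial.map (Int.castRingHom ℚ))
    (MvPolynomial.map_injective _ Int.cast_injective) ?_
  rw [RingHom.map_mul, WittVector.map_teichmuller, teichmuller_mul_eq_aux₁, map_teichMulAux]

/-- The key coefficient formula: `(τ(c) * w)ᵢ = c ^ (p ^ i) * wᵢ`. -/
theorem teichmuller_mul_coeff' {R : Type*} [CommRing R] (c : R) (w : WittVector p R) (i : ℕ) :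
    (WittVector.teichmuller p c * w).coeff i = c ^ p ^ i * w.coeff i := by
  obtain ⟨c, rfl⟩ := MvPolynomial.counit_surjective R c
  obtain ⟨w, rfl⟩ := WittVector.map_surjective (MvPolynomial.counit R)
    (MvPolynomial.counit_surjective R) w
  rw [← WittVector.map_teichmuller, ← RingHom.map_mul, teichmuller_mul_eq_aux₂,
    map_teichMulAux, teichMulAux_coeff, WittVector.map_coeff]

/-- Truncated version of the coefficient formula. -/
theorem truncate_teichmuller_mul_coeff {R : Type*} [CommRing R] {n : ℕ} (c : R)
    (v : TruncatedWittVector p n R) (i : Fin n) :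
    (WittVector.truncate n (WittVector.teichmuller p c) * v).coeff i
      = c ^ p ^ (i : ℕ) * v.coeff i := by
  obtain ⟨w, rfl⟩ := WittVector.truncate_surjective (p := p) n R v
  rw [← RingHom.map_mul, WittVector.coeff_truncate, teichmuller_mul_coeff',
    WittVector.coeff_truncate]

end TeichmullerMul

/-- Let `p` be a prime, `A` a commutative ring of characteristic `p`, `x ∈ A`, `n ≥ 1`.
Equip `Wₙ(A[1/x])` with the `Wₙ(A)`-algebra structure given by the functorially induced
ring homomorphism `φ`.  Then `Wₙ(A[1/x])` is the localization of `Wₙ(A)` away from the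
Teichmüller lift `τ(x)`: that is, `Wₙ(A[1/x]) = Wₙ(A)[1/τ(x)]`. -/
theorem truncatedWittVector_localization_away
    (p : ℕ) [Fact p.Prime] (A : Type*) [CommRing A] [CharP A p] (x : A) (n : ℕ) (hn : 1 ≤ n)
    (φ : TruncatedWittVector p n A →+* TruncatedWittVector p n (Localization.Away x))
    (hφ : ∀ w : WittVector p A, φ (WittVector.truncate n w) =
      WittVector.truncate n (WittVector.map (algebraMap A (Localization.Away x)) w)) :
    letI : Algebra (TruncatedWittVector p n A) (TruncatedWittVector p n (Localization.Away x)) :=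
      φ.toAlgebra
    IsLocalization.Away (WittVector.truncate n (WittVector.teichmuller p x))
      (TruncatedWittVector p n (Localization.Away x)) := by
  letI : Algebra (TruncatedWittVector p n A) (TruncatedWittVector p n (Localization.Away x)) :=
    φ.toAlgebra
  set S := Localization.Away x with hS
  set f : A →+* S := algebraMap A S with hf
  set t : TruncatedWittVector p n A :=
    WittVector.truncate n (WittVector.teichmuller p x) with ht
  have halg : algebraMap (TruncatedWittVector p n A) (TruncatedWittVector p n S) = φ :=
    RingHom.algebraMap_toAlgebra φ
  -- coefficients of `φ w`
  have hφcoeff : ∀ (w : TruncatedWittVector p n A) (i : Fin n),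
      (φ w).coeff i = f (w.coeff i) := by
    intro w i
    obtain ⟨w, rfl⟩ := WittVector.truncate_surjective (p := p) n A w
    rw [hφ, WittVector.coeff_truncate, WittVector.map_coeff, WittVector.coeff_truncate]
  -- powers of `t` and their images
  have htpow : ∀ m : ℕ, t ^ m = WittVector.truncate n (WittVector.teichmuller p (x ^ m)) := by
    intro m
    rw [ht, ← map_pow, ← map_pow]
  have hφt : ∀ m : ℕ,
      φ (t ^ m) = WittVector.truncate n (WittVector.teichmuller p (f x ^ m)) := by
    intro m
    rw [htpow, hφ, WittVector.map_teichmuller, map_pow]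
  -- coefficients of `t ^ m * v` over `A`
  have htmul : ∀ (m : ℕ) (v : TruncatedWittVector p n A) (i : Fin n),
      (t ^ m * v).coeff i = x ^ (m * p ^ (i : ℕ)) * v.coeff i := by
    intro m v i
    rw [htpow, truncate_teichmuller_mul_coeff, ← pow_mul]
  -- coefficients of `φ (t ^ m) * v` over `S`
  have hφtmul : ∀ (m : ℕ) (v : TruncatedWittVector p n S) (i : Fin n),
      (φ (t ^ m) * v).coeff i = f x ^ (m * p ^ (i : ℕ)) * v.coeff i := by
    intro m v i
    rw [hφt, truncate_teichmuller_mul_coeff, ← pow_mul]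
  have hxunit : IsUnit (f x) := IsLocalization.Away.algebraMap_isUnit x
  have hple : ∀ (m : ℕ) (i : Fin n), m ≤ m * p ^ (i : ℕ) :=
    fun m i => Nat.le_mul_of_pos_right m (pow_pos (Fact.out (p := p.Prime)).pos _)
  constructor
  constructor
  · -- map_units
    rintro ⟨y, m, rfl⟩
    rw [halg, hφt]
    exact ((hxunit.pow m).map (WittVector.teichmuller p)).map
      (WittVector.truncate n (p := p) (R := S))
  · -- surjectivity
    intro z
    have H : ∀ i : Fin n, ∃ (a : A) (k : ℕ), z.coeff i * f x ^ k = f a := by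
      intro i
      obtain ⟨⟨a, s⟩, hs⟩ := IsLocalization.surj (Submonoid.powers x) (z.coeff i)
      obtain ⟨k, hk⟩ := s.2
      refine ⟨a, k, ?_⟩
      rw [← map_pow, show x ^ k = (s : A) from hk]
      exact hs
    choose a k hk using H
    set m : ℕ := Finset.univ.sup k with hm
    have hkm : ∀ i : Fin n, k i ≤ m * p ^ (i : ℕ) :=
      fun i => le_trans (Finset.le_sup (Finset.mem_univ i)) (hple m i)
    refine ⟨⟨TruncatedWittVector.mk p fun i => a i * x ^ (m * p ^ (i : ℕ) - k i),
      ⟨t ^ m, m, rfl⟩⟩, ?_⟩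
    rw [halg]
    ext i
    rw [mul_comm z, hφtmul, hφcoeff, TruncatedWittVector.coeff_mk, map_mul, map_pow, ← hk,
      mul_assoc, ← pow_add, Nat.add_sub_cancel' (hkm i), mul_comm]
  · -- exists_of_eq
    intro v v' h
    rw [halg] at h
    have H : ∀ i : Fin n, ∃ k : ℕ, x ^ k * v.coeff i = x ^ k * v'.coeff i := by
      intro i
      have : f (v.coeff i) = f (v'.coeff i) := by
        rw [← hφcoeff, ← hφcoeff, h]
      obtain ⟨c, hc⟩ := (IsLocalization.eq_iff_exists (Submonoid.powers x) S).mp this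
      obtain ⟨k, hkc⟩ := c.2
      exact ⟨k, by rw [show x ^ k = (c : A) from hkc]; exact hc⟩
    choose k hk using H
    set m : ℕ := Finset.univ.sup k with hm
    refine ⟨⟨t ^ m, m, rfl⟩, ?_⟩
    ext i
    have hkm : k i ≤ m * p ^ (i : ℕ) :=
      le_trans (Finset.le_sup (Finset.mem_univ i)) (hple m i)
    rw [htmul, htmul, ← Nat.sub_add_cancel hkm, pow_add, mul_assoc, mul_assoc, hk]
end

section
/- Let d₀ be a squarefree positive integer with d₀ ≡ 7 (mod 8), and let a, b, c, k be integers with a > 0, a·c − b² = k²·d₀, and such that gcd(a, b, c) is a power of 2. Then for every odd prime l such that −d₀ is a quadratic nonresidue modulo l (i.e. the Legendre symbol (−d₀ / l) equals −1), the l-adic valuation of a is even. -/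
private lemma dvd_both_of_nonresidue (d : ℤ) (l : ℕ) [Fact l.Prime]
    (hns : ¬ IsSquare ((-d : ℤ) : ZMod l))
    {x y : ℤ} (h : (l : ℤ) ∣ x ^ 2 + y ^ 2 * d) : (l : ℤ) ∣ x ∧ (l : ℤ) ∣ y := by
  have h0 : ((x : ZMod l)) ^ 2 + ((y : ZMod l)) ^ 2 * (d : ZMod l) = 0 := by
    have := (ZMod.intCast_zmod_eq_zero_iff_dvd _ l).mpr h
    push_cast at this
    exact this
  have hy : (y : ZMod l) = 0 := by
    by_contra hy
    apply hns
    refine ⟨(x : ZMod l) * (y : ZMod l)⁻¹, ?_⟩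
    push_cast
    field_simp
    linear_combination -h0
  have hx : (x : ZMod l) = 0 := by
    have : ((x : ZMod l)) ^ 2 = 0 := by
      rw [hy] at h0; simpa using h0
    exact pow_eq_zero_iff (n := 2) (by norm_num) |>.mp this
  exact ⟨(ZMod.intCast_zmod_eq_zero_iff_dvd _ l).mp hx,
    (ZMod.intCast_zmod_eq_zero_iff_dvd _ l).mp hy⟩

private lemma key_val_even (d : ℤ) (l : ℕ) [hlp : Fact l.Prime]
    (hns : ¬ IsSquare ((-d : ℤ) : ZMod l)) :
    ∀ n : ℕ, ∀ x y : ℤ, x.natAbs + y.natAbs = n → x ^ 2 + y ^ 2 * d ≠ 0 →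
      Even (padicValInt l (x ^ 2 + y ^ 2 * d)) := by
  intro n
  induction n using Nat.strong_induction_on with
  | _ n ih =>
    intro x y hn hne
    by_cases hdvd : (l : ℤ) ∣ x ^ 2 + y ^ 2 * d
    · obtain ⟨hdx, hdy⟩ := dvd_both_of_nonresidue d l hns hdvd
      obtain ⟨x₁, rfl⟩ := hdx
      obtain ⟨y₁, rfl⟩ := hdy
      have hfact : ((l : ℤ) * x₁) ^ 2 + ((l : ℤ) * y₁) ^ 2 * d
          = (l : ℤ) ^ 2 * (x₁ ^ 2 + y₁ ^ 2 * d) := by ring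
      have hz : x₁ ^ 2 + y₁ ^ 2 * d ≠ 0 := by
        intro h; apply hne; rw [hfact, h, mul_zero]
      have hl2 : 2 ≤ l := hlp.out.two_le
      have hlz : (l : ℤ) ≠ 0 := by positivity
      have hxy : x₁ ≠ 0 ∨ y₁ ≠ 0 := by
        by_contra hc
        push_neg at hc
        apply hz; rw [hc.1, hc.2]; ring
      have hmeas : x₁.natAbs + y₁.natAbs < n := by
        have h1 : ((l : ℤ) * x₁).natAbs = l * x₁.natAbs := by
          rw [Int.natAbs_mul, Int.natAbs_natCast]
        have h2 : ((l : ℤ) * y₁).natAbs = l * y₁.natAbs := by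
          rw [Int.natAbs_mul, Int.natAbs_natCast]
        have hx1 : x₁.natAbs ≠ 0 ∨ y₁.natAbs ≠ 0 := by
          rcases hxy with h | h
          · exact Or.inl (Int.natAbs_ne_zero.mpr h)
          · exact Or.inr (Int.natAbs_ne_zero.mpr h)
        have e1 : 2 * x₁.natAbs ≤ l * x₁.natAbs := Nat.mul_le_mul_right _ hl2
        have e2 : 2 * y₁.natAbs ≤ l * y₁.natAbs := Nat.mul_le_mul_right _ hl2
        omega
      have ihv := ih _ hmeas x₁ y₁ rfl hz
      rw [hfact, padicValInt.mul (by positivity) hz]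
      have hvp : padicValInt l ((l : ℤ) ^ 2) = 2 := by
        have : ((l : ℤ) ^ 2) = ((l ^ 2 : ℕ) : ℤ) := by push_cast; ring
        rw [this, padicValInt.of_nat, padicValNat.prime_pow]
      rw [hvp]
      obtain ⟨m, hm⟩ := ihv
      exact ⟨m + 1, by omega⟩
    · rw [padicValInt.eq_zero_of_not_dvd hdvd]
      exact Even.zero

/-- Let `d₀` be a squarefree positive integer with `d₀ ≡ 7 (mod 8)`, and let
`a, b, c, k` be integers with `a > 0`, `a·c − b² = k²·d₀`, and `gcd(a,b,c)` a power
of 2.  Then for every odd prime `l` such that `−d₀` is a quadratic nonresidue mod `l`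
(Legendre symbol `(−d₀/l) = −1`), the `l`-adic valuation of `a` is even. -/
theorem valuation_even_of_nonresidue (d₀ a b c k : ℤ)
    (hd₀pos : 0 < d₀) (hd₀sf : Squarefree d₀) (hd₀mod : d₀ % 8 = 7)
    (ha : 0 < a) (hdet : a * c - b ^ 2 = k ^ 2 * d₀)
    (hgcd : ∃ t : ℕ, (Int.gcd (Int.gcd a b) c : ℤ) = 2 ^ t)
    (l : ℕ) [Fact l.Prime] (hl2 : l ≠ 2)
    (hleg : legendreSym l (-d₀) = -1) :
    Even (padicValInt l a) := by
  have hlp : l.Prime := Fact.out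
  have hlz : ((-d₀ : ℤ) : ZMod l) ≠ 0 := by
    intro h
    rw [← legendreSym.eq_zero_iff] at h
    omega
  have hns : ¬ IsSquare ((-d₀ : ℤ) : ZMod l) := by
    intro h
    rw [← legendreSym.eq_one_iff _ hlz] at h
    omega
  by_cases hdvd : (l : ℤ) ∣ a
  · have hac : a * c = b ^ 2 + k ^ 2 * d₀ := by linarith
    have hdbk : (l : ℤ) ∣ b ^ 2 + k ^ 2 * d₀ := by
      rw [← hac]; exact hdvd.mul_right c
    obtain ⟨hdb, hdk⟩ := dvd_both_of_nonresidue d₀ l hns hdbk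
    have hc : ¬ (l : ℤ) ∣ c := by
      intro hdc
      obtain ⟨t, ht⟩ := hgcd
      have hg : (l : ℤ) ∣ (Int.gcd (Int.gcd a b) c : ℤ) :=
        Int.dvd_coe_gcd (Int.dvd_coe_gcd hdvd hdb) hdc
      rw [ht] at hg
      have : (l : ℤ) ∣ ((2 ^ t : ℕ) : ℤ) := by push_cast; exact hg
      have : l ∣ 2 ^ t := Int.ofNat_dvd.mp this
      have := hlp.dvd_of_dvd_pow this
      have := (Nat.prime_dvd_prime_iff_eq hlp Nat.prime_two).mp this
      exact hl2 this
    have hcz : c ≠ 0 := by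
      intro h; exact hc (h ▸ dvd_zero _)
    have haz : a ≠ 0 := ha.ne'
    have hane : a * c ≠ 0 := mul_ne_zero haz hcz
    have hbk : b ^ 2 + k ^ 2 * d₀ ≠ 0 := by rw [← hac]; exact hane
    have hkey := key_val_even d₀ l hns (b.natAbs + k.natAbs) b k rfl hbk
    rw [← hac, padicValInt.mul haz hcz, padicValInt.eq_zero_of_not_dvd hc] at hkey
    simpa using hkey
  · rw [padicValInt.eq_zero_of_not_dvd hdvd]
    exact Even.zero
end

section
/- Let k be a field of characteristic 3 and b ∈ k. Let A = k[x,y,z]/(−z² + x³ + y⁵ + b·x²·y³) (for b = 1, 0 and λ = b·y this is the rational double point E₈^1, E₈^0), A' = A[1/(xy)] the localization at the powers of xy, and ε := z·x^{−1}·y^{−1} ∈ A'. Then in the ring W(A') of 3-typical Witt vectors there exist u, v ∈ W(A') such that every coefficient of u lies in the image of A[1/x] in A', every coefficient of v lies in the image of A[1/y] in A', and the Witt vector τ(ε)³ − V(τ(b·ε)) − u − v has vanishing coefficients in degrees 0 and 1. (This expresses F(τ(ε)) ≡ V(τ(b·ε)) in W₂(A') modulo W₂(A[1/x]) + W₂(A[1/y]).)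 -/
open MvPolynomial

section Aux

open WittVector

/-- Elements of `S` that become elements of the image of `ι` after multiplying by a power of
`ι x`; this is a subring of `S`. -/
def imLoc {R S : Type} [CommRing R] [CommRing S] (ι : R →+* S) (x : R) : Subring S where
  carrier := {w | ∃ (r : R) (t : ℕ), w * ι x ^ t = ι r}
  zero_mem' := ⟨0, 0, by simp⟩
  one_mem' := ⟨1, 0, by simp⟩
  add_mem' := by
    rintro w₁ w₂ ⟨r₁, t₁, h₁⟩ ⟨r₂, t₂, h₂⟩
    refine ⟨r₁ * x ^ t₂ + r₂ * x ^ t₁, t₁ + t₂, ?_⟩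
    simp only [map_add, map_mul, map_pow]
    linear_combination (ι x ^ t₂) * h₁ + (ι x ^ t₁) * h₂
  mul_mem' := by
    rintro w₁ w₂ ⟨r₁, t₁, h₁⟩ ⟨r₂, t₂, h₂⟩
    refine ⟨r₁ * r₂, t₁ + t₂, ?_⟩
    simp only [map_mul]
    linear_combination (ι r₂) * h₁ + (w₁ * ι x ^ t₁) * h₂
  neg_mem' := by
    rintro w ⟨r, t, h⟩
    refine ⟨-r, t, ?_⟩
    simp only [map_neg]
    linear_combination -h

lemma mem_imLoc {R S : Type} [CommRing R] [CommRing S] {ι : R →+* S} {x : R} {w : S} :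
    w ∈ imLoc ι x ↔ ∃ (r : R) (t : ℕ), w * ι x ^ t = ι r := Iff.rfl

lemma ghost_zero_eq {R : Type} [CommRing R] (w : WittVector 3 R) :
    ghostComponent 0 w = w.coeff 0 := by
  rw [ghostComponent_apply, wittPolynomial_zero, aeval_X]

lemma ghost_one_eq {R : Type} [CommRing R] (w : WittVector 3 R) :
    ghostComponent 1 w = w.coeff 0 ^ 3 + 3 * w.coeff 1 := by
  rw [ghostComponent_apply, wittPolynomial_one]
  simp only [map_add, map_mul, map_pow, aeval_C, aeval_X, map_natCast, Nat.cast_ofNat, map_ofNat]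
  ring

lemma rat_case {R : Type} [CommRing R] [Algebra ℚ R] (a c : R) (d : WittVector 3 R) :
    (teichmuller 3 a + teichmuller 3 c + verschiebung d).coeff 1
      = d.coeff 0 - (a ^ 2 * c + a * c ^ 2) := by
  set w : WittVector 3 R := teichmuller 3 a + teichmuller 3 c + verschiebung d with hw
  have h3 : IsUnit (3 : R) := by
    have h := (algebraMap ℚ R).isUnit_map (isUnit_iff_ne_zero.mpr (by norm_num : (3:ℚ) ≠ 0))
    rwa [map_ofNat] at h
  refine h3.mul_left_cancel ?_
  have hgv := ghostComponent_verschiebung (p := 3) d 0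
  norm_num at hgv
  have hg1 : ghostComponent 1 w = a ^ 3 + c ^ 3 + 3 * d.coeff 0 := by
    rw [hw, map_add, map_add, ghostComponent_teichmuller, ghostComponent_teichmuller,
      hgv, ghost_zero_eq]
    norm_num
  have hg2 := ghost_one_eq w
  have hc0 : w.coeff 0 = a + c := by
    rw [hw, add_coeff_zero, add_coeff_zero, teichmuller_coeff_zero, teichmuller_coeff_zero,
      verschiebung_coeff_zero, add_zero]
  linear_combination hg1 - hg2 - (w.coeff 0 ^ 2 + w.coeff 0 * (a + c) + (a + c) ^ 2) * hc0

lemma coeff_one_add_add {R : Type} [CommRing R] (a c : R) (d : WittVector 3 R) :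
    (teichmuller 3 a + teichmuller 3 c + verschiebung d).coeff 1
      = d.coeff 0 - (a ^ 2 * c + a * c ^ 2) := by
  have key : ∀ d0 : WittVector 3 (MvPolynomial ℕ ℤ),
      (teichmuller 3 (X 0) + teichmuller 3 (X 1) + verschiebung d0).coeff 1
        = d0.coeff 0 - ((X 0) ^ 2 * X 1 + X 0 * (X 1) ^ 2) := by
    intro d0
    apply MvPolynomial.map_injective (Int.castRingHom ℚ) Int.cast_injective
    have h := rat_case (MvPolynomial.map (Int.castRingHom ℚ) (X 0))
      (MvPolynomial.map (Int.castRingHom ℚ) (X 1))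
      (WittVector.map (MvPolynomial.map (Int.castRingHom ℚ)) d0)
    rw [← map_teichmuller, ← map_teichmuller, ← map_verschiebung, ← map_add, ← map_add,
      map_coeff, map_coeff] at h
    rw [h]
    simp only [map_sub, map_add, map_mul, map_pow]
  have g : ℕ → R := fun n => 0
  set g : ℕ → R := fun n => match n with | 0 => a | 1 => c | (m+2) => d.coeff m with hg
  have h := congrArg (aeval g : MvPolynomial ℕ ℤ →ₐ[ℤ] R).toRingHom
    (key (WittVector.mk 3 fun n => X (n + 2)))
  have hmap : WittVector.map (aeval g : MvPolynomial ℕ ℤ →ₐ[ℤ] R).toRingHom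
      (WittVector.mk 3 fun n => X (n + 2)) = d := by
    ext n
    simp only [map_coeff, WittVector.coeff_mk, AlgHom.toRingHom_eq_coe, RingHom.coe_coe, aeval_X]
    rfl
  rw [← map_coeff, map_add, map_add, map_teichmuller, map_teichmuller, map_verschiebung,
    hmap] at h
  simp only [AlgHom.toRingHom_eq_coe, RingHom.coe_coe, aeval_X, map_sub, map_add, map_mul,
    map_pow, WittVector.coeff_mk] at h
  exact h

lemma main_aux {R S : Type} [CommRing R] [CommRing S] (ι : R →+* S)
    (x y z b : R) (Xi Yi : S)
    (hXi : ι x * Xi = 1) (hYi : ι y * Yi = 1)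
    (hrel0 : -(ι z ^ 2) + ι x ^ 3 + ι y ^ 5 + ι b * ι x ^ 2 * ι y ^ 3 = 0)
    (h3 : (3 : S) = 0) (ε : S) (hε : ε = ι z * Xi * Yi) :
    ∃ u v : WittVector 3 S,
      (∀ i : ℕ, ∃ (s : R) (t : ℕ), u.coeff i * ι x ^ t = ι s) ∧
      (∀ i : ℕ, ∃ (s : R) (t : ℕ), v.coeff i * ι y ^ t = ι s) ∧
      ∀ i < 2, (teichmuller 3 ε ^ 3 - verschiebung (teichmuller 3 (ι b * ε)) - u - v).coeff i
        = 0 := by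
  have hrel : ι z ^ 2 = ι x ^ 3 + ι y ^ 5 + ι b * ι x ^ 2 * ι y ^ 3 := by
    linear_combination -hrel0
  set a : S := ι z * ((ι y) ^ 2 + ι b * (ι x) ^ 2) * Xi ^ 3 with ha_def
  set c : S := ι z * Yi ^ 3 with hc_def
  set sS : S := ι z * ((ι y) ^ 6 - (ι x) ^ 3 * ι y + (ι b) ^ 3 * (ι x) ^ 6) * Xi ^ 6 with hs_def
  set tS : S := ι z * ((ι y) ^ 2 + ι b * (ι x) ^ 2 - (ι b) ^ 2 * ι x * (ι y) ^ 3) * Yi ^ 6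
    with ht_def
  have ha : a * ι x ^ 3 = ι (z * (y ^ 2 + b * x ^ 2)) := by
    rw [ha_def]
    simp only [map_mul, map_add, map_pow]
    linear_combination ((ι y) ^ 2 * (ι z) +
      (ι x) * (ι y) ^ 2 * (ι z) * Xi +
      (ι x) ^ 2 * (ι z) * (ι b) +
      (ι x) ^ 2 * (ι y) ^ 2 * (ι z) * Xi ^ 2 +
      (ι x) ^ 3 * (ι z) * (ι b) * Xi +
      (ι x) ^ 4 * (ι z) * (ι b) * Xi ^ 2) * hXi
  have hs : sS * ι x ^ 6 = ι (z * (y ^ 6 - x ^ 3 * y + b ^ 3 * x ^ 6)) := by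
    rw [hs_def]
    simp only [map_mul, map_add, map_sub, map_pow]
    linear_combination ((ι y) ^ 6 * (ι z) +
      (ι x) * (ι y) ^ 6 * (ι z) * Xi +
      (ι x) ^ 2 * (ι y) ^ 6 * (ι z) * Xi ^ 2 -
      (ι x) ^ 3 * (ι y) * (ι z) +
      (ι x) ^ 3 * (ι y) ^ 6 * (ι z) * Xi ^ 3 -
      (ι x) ^ 4 * (ι y) * (ι z) * Xi +
      (ι x) ^ 4 * (ι y) ^ 6 * (ι z) * Xi ^ 4 -
      (ι x) ^ 5 * (ι y) * (ι z) * Xi ^ 2 +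
      (ι x) ^ 5 * (ι y) ^ 6 * (ι z) * Xi ^ 5 +
      (ι x) ^ 6 * (ι z) * (ι b) ^ 3 -
      (ι x) ^ 6 * (ι y) * (ι z) * Xi ^ 3 +
      (ι x) ^ 7 * (ι z) * (ι b) ^ 3 * Xi -
      (ι x) ^ 7 * (ι y) * (ι z) * Xi ^ 4 +
      (ι x) ^ 8 * (ι z) * (ι b) ^ 3 * Xi ^ 2 -
      (ι x) ^ 8 * (ι y) * (ι z) * Xi ^ 5 +
      (ι x) ^ 9 * (ι z) * (ι b) ^ 3 * Xi ^ 3 +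
      (ι x) ^ 10 * (ι z) * (ι b) ^ 3 * Xi ^ 4 +
      (ι x) ^ 11 * (ι z) * (ι b) ^ 3 * Xi ^ 5) * hXi
  have hc : c * ι y ^ 3 = ι z := by
    rw [hc_def]
    linear_combination ((ι z) +
      (ι y) * (ι z) * Yi +
      (ι y) ^ 2 * (ι z) * Yi ^ 2) * hYi
  have ht : tS * ι y ^ 6 = ι (z * (y ^ 2 + b * x ^ 2 - b ^ 2 * x * y ^ 3)) := by
    rw [ht_def]
    simp only [map_mul, map_add, map_sub, map_pow]
    linear_combination ((ι y) ^ 2 * (ι z) +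
      (ι y) ^ 3 * (ι z) * Yi +
      (ι y) ^ 4 * (ι z) * Yi ^ 2 +
      (ι y) ^ 5 * (ι z) * Yi ^ 3 +
      (ι y) ^ 6 * (ι z) * Yi ^ 4 +
      (ι y) ^ 7 * (ι z) * Yi ^ 5 -
      (ι x) * (ι y) ^ 3 * (ι z) * (ι b) ^ 2 -
      (ι x) * (ι y) ^ 4 * (ι z) * (ι b) ^ 2 * Yi -
      (ι x) * (ι y) ^ 5 * (ι z) * (ι b) ^ 2 * Yi ^ 2 -
      (ι x) * (ι y) ^ 6 * (ι z) * (ι b) ^ 2 * Yi ^ 3 -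
      (ι x) * (ι y) ^ 7 * (ι z) * (ι b) ^ 2 * Yi ^ 4 -
      (ι x) * (ι y) ^ 8 * (ι z) * (ι b) ^ 2 * Yi ^ 5 +
      (ι x) ^ 2 * (ι z) * (ι b) +
      (ι x) ^ 2 * (ι y) * (ι z) * (ι b) * Yi +
      (ι x) ^ 2 * (ι y) ^ 2 * (ι z) * (ι b) * Yi ^ 2 +
      (ι x) ^ 2 * (ι y) ^ 3 * (ι z) * (ι b) * Yi ^ 3 +
      (ι x) ^ 2 * (ι y) ^ 4 * (ι z) * (ι b) * Yi ^ 4 +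
      (ι x) ^ 2 * (ι y) ^ 5 * (ι z) * (ι b) * Yi ^ 5) * hYi
  have hamem : a ∈ imLoc ι x := ⟨_, 3, ha⟩
  have hsmem : sS ∈ imLoc ι x := ⟨_, 6, hs⟩
  have hcmem : c ∈ imLoc ι y := ⟨_, 3, hc⟩
  have htmem : tS ∈ imLoc ι y := ⟨_, 6, ht⟩
  refine ⟨WittVector.map (imLoc ι x).subtype
      (teichmuller 3 (⟨a, hamem⟩ : imLoc ι x) + verschiebung (teichmuller 3 (⟨sS, hsmem⟩ : imLoc ι x))),
    WittVector.map (imLoc ι y).subtype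
      (teichmuller 3 (⟨c, hcmem⟩ : imLoc ι y) + verschiebung (teichmuller 3 (⟨tS, htmem⟩ : imLoc ι y))), ?_, ?_, ?_⟩
  · intro i
    rw [map_coeff]
    exact ((teichmuller 3 (⟨a, hamem⟩ : imLoc ι x) + verschiebung (teichmuller 3 (⟨sS, hsmem⟩ : imLoc ι x))).coeff i).2
  · intro i
    rw [map_coeff]
    exact ((teichmuller 3 (⟨c, hcmem⟩ : imLoc ι y) + verschiebung (teichmuller 3 (⟨tS, htmem⟩ : imLoc ι y))).coeff i).2
  · intro i hi
    have hu : WittVector.map (imLoc ι x).subtype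
        (teichmuller 3 (⟨a, hamem⟩ : imLoc ι x) + verschiebung (teichmuller 3 (⟨sS, hsmem⟩ : imLoc ι x)))
        = teichmuller 3 a + verschiebung (teichmuller 3 sS) := by
      simp only [map_add, map_verschiebung, map_teichmuller, Subring.coe_subtype]
    have hv : WittVector.map (imLoc ι y).subtype
        (teichmuller 3 (⟨c, hcmem⟩ : imLoc ι y) + verschiebung (teichmuller 3 (⟨tS, htmem⟩ : imLoc ι y)))
        = teichmuller 3 c + verschiebung (teichmuller 3 tS) := by
      simp only [map_add, map_verschiebung, map_teichmuller, Subring.coe_subtype]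
    have hE : teichmuller 3 ε ^ 3 - verschiebung (teichmuller 3 (ι b * ε))
          - WittVector.map (imLoc ι x).subtype
            (teichmuller 3 (⟨a, hamem⟩ : imLoc ι x) + verschiebung (teichmuller 3 (⟨sS, hsmem⟩ : imLoc ι x)))
          - WittVector.map (imLoc ι y).subtype
            (teichmuller 3 (⟨c, hcmem⟩ : imLoc ι y) + verschiebung (teichmuller 3 (⟨tS, htmem⟩ : imLoc ι y)))
        = teichmuller 3 (ε ^ 3) - (teichmuller 3 a + teichmuller 3 c +
            verschiebung (teichmuller 3 (ι b * ε) + teichmuller 3 sS + teichmuller 3 tS)) := by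
      rw [hu, hv, ← map_pow (teichmuller 3) ε 3, map_add verschiebung, map_add verschiebung]
      ring
    rw [hE]
    refine (WittVector.mem_ker_truncate 2 _).mp ?_ i hi
    rw [RingHom.mem_ker, map_sub, sub_eq_zero]
    apply TruncatedWittVector.ext
    intro j
    rw [WittVector.coeff_truncate, WittVector.coeff_truncate]
    fin_cases j
    · show (teichmuller 3 (ε ^ 3)).coeff 0 = _
      rw [teichmuller_coeff_zero, add_coeff_zero, add_coeff_zero, teichmuller_coeff_zero,
        teichmuller_coeff_zero, verschiebung_coeff_zero, add_zero]
      rw [ha_def, hc_def, hε]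
      linear_combination ((ι z) * Xi ^ 3 * Yi ^ 3) * hrel +
    ((ι z) * Yi ^ 3 -
      (ι z) * (ι b) * Xi +
      (ι y) ^ 3 * (ι z) * (ι b) * Xi * Yi ^ 3 +
      (ι x) * (ι z) * Xi * Yi ^ 3 -
      (ι x) * (ι z) * (ι b) * Xi ^ 2 +
      (ι x) * (ι y) ^ 3 * (ι z) * (ι b) * Xi ^ 2 * Yi ^ 3 +
      (ι x) ^ 2 * (ι z) * Xi ^ 2 * Yi ^ 3) * hXi +
    ((ι z) * (ι b) * Xi +
      (ι y) * (ι z) * (ι b) * Xi * Yi +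
      (ι y) ^ 2 * (ι z) * Xi ^ 3 +
      (ι y) ^ 2 * (ι z) * (ι b) * Xi * Yi ^ 2 +
      (ι y) ^ 3 * (ι z) * Xi ^ 3 * Yi +
      (ι y) ^ 4 * (ι z) * Xi ^ 3 * Yi ^ 2) * hYi
    · show (teichmuller 3 (ε ^ 3)).coeff 1 = _
      rw [teichmuller_coeff_pos 3 _ 1 Nat.one_pos, coeff_one_add_add,
        add_coeff_zero, add_coeff_zero, teichmuller_coeff_zero, teichmuller_coeff_zero,
        teichmuller_coeff_zero]
      rw [ha_def, hc_def, hs_def, ht_def, hε]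
      linear_combination ((ι y) ^ 2 * (ι z) * Xi ^ 3 * Yi ^ 6 +
      (ι y) ^ 4 * (ι z) * Xi ^ 6 * Yi ^ 3 +
      (ι x) ^ 2 * (ι z) * (ι b) * Xi ^ 3 * Yi ^ 6 +
      (2:S) * (ι x) ^ 2 * (ι y) ^ 2 * (ι z) * (ι b) * Xi ^ 6 * Yi ^ 3 +
      (ι x) ^ 4 * (ι z) * (ι b) ^ 2 * Xi ^ 6 * Yi ^ 3) * hrel +
    (-(ι z) * (ι b) ^ 3 +
      (ι y) * (ι z) * Xi ^ 3 +
      (ι y) ^ 2 * (ι z) * Yi ^ 6 +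
      (2:S) * (ι y) ^ 2 * (ι z) * (ι b) * Xi * Yi ^ 3 +
      (ι y) ^ 3 * (ι z) * (ι b) ^ 3 * Yi ^ 3 +
      (ι y) ^ 4 * (ι z) * Xi ^ 3 * Yi ^ 3 +
      (2:S) * (ι y) ^ 5 * (ι z) * (ι b) * Xi * Yi ^ 6 +
      (3:S) * (ι y) ^ 5 * (ι z) * (ι b) ^ 2 * Xi ^ 2 * Yi ^ 3 +
      (3:S) * (ι y) ^ 7 * (ι z) * (ι b) * Xi ^ 4 * Yi ^ 3 +
      (ι x) * (ι z) * (ι b) ^ 2 * Yi ^ 3 -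
      (ι x) * (ι z) * (ι b) ^ 3 * Xi +
      (ι x) * (ι y) * (ι z) * Xi ^ 4 +
      (ι x) * (ι y) ^ 2 * (ι z) * Xi * Yi ^ 6 +
      (2:S) * (ι x) * (ι y) ^ 2 * (ι z) * (ι b) * Xi ^ 2 * Yi ^ 3 +
      (ι x) * (ι y) ^ 3 * (ι z) * (ι b) ^ 2 * Yi ^ 6 +
      (ι x) * (ι y) ^ 3 * (ι z) * (ι b) ^ 3 * Xi * Yi ^ 3 +
      (ι x) * (ι y) ^ 4 * (ι z) * Xi ^ 4 * Yi ^ 3 +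
      (2:S) * (ι x) * (ι y) ^ 5 * (ι z) * (ι b) * Xi ^ 2 * Yi ^ 6 +
      (3:S) * (ι x) * (ι y) ^ 5 * (ι z) * (ι b) ^ 2 * Xi ^ 3 * Yi ^ 3 +
      (3:S) * (ι x) * (ι y) ^ 7 * (ι z) * (ι b) * Xi ^ 5 * Yi ^ 3 +
      (ι x) ^ 2 * (ι z) * (ι b) * Yi ^ 6 +
      (ι x) ^ 2 * (ι z) * (ι b) ^ 2 * Xi * Yi ^ 3 -
      (ι x) ^ 2 * (ι z) * (ι b) ^ 3 * Xi ^ 2 +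
      (ι x) ^ 2 * (ι y) * (ι z) * Xi ^ 5 +
      (ι x) ^ 2 * (ι y) ^ 2 * (ι z) * Xi ^ 2 * Yi ^ 6 +
      (2:S) * (ι x) ^ 2 * (ι y) ^ 2 * (ι z) * (ι b) * Xi ^ 3 * Yi ^ 3 +
      (ι x) ^ 2 * (ι y) ^ 3 * (ι z) * (ι b) ^ 2 * Xi * Yi ^ 6 +
      (ι x) ^ 2 * (ι y) ^ 3 * (ι z) * (ι b) ^ 3 * Xi ^ 2 * Yi ^ 3 +
      (ι x) ^ 2 * (ι y) ^ 4 * (ι z) * Xi ^ 5 * Yi ^ 3 +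
      (3:S) * (ι x) ^ 2 * (ι y) ^ 5 * (ι z) * (ι b) ^ 2 * Xi ^ 4 * Yi ^ 3 +
      (ι x) ^ 3 * (ι z) * (ι b) * Xi * Yi ^ 6 +
      (ι x) ^ 3 * (ι z) * (ι b) ^ 2 * Xi ^ 2 * Yi ^ 3 -
      (ι x) ^ 3 * (ι z) * (ι b) ^ 3 * Xi ^ 3 +
      (2:S) * (ι x) ^ 3 * (ι y) ^ 2 * (ι z) * (ι b) * Xi ^ 4 * Yi ^ 3 +
      (ι x) ^ 3 * (ι y) ^ 3 * (ι z) * (ι b) ^ 2 * Xi ^ 2 * Yi ^ 6 +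
      (ι x) ^ 3 * (ι y) ^ 3 * (ι z) * (ι b) ^ 3 * Xi ^ 3 * Yi ^ 3 +
      (3:S) * (ι x) ^ 3 * (ι y) ^ 5 * (ι z) * (ι b) ^ 2 * Xi ^ 5 * Yi ^ 3 +
      (ι x) ^ 4 * (ι z) * (ι b) * Xi ^ 2 * Yi ^ 6 +
      (ι x) ^ 4 * (ι z) * (ι b) ^ 2 * Xi ^ 3 * Yi ^ 3 -
      (ι x) ^ 4 * (ι z) * (ι b) ^ 3 * Xi ^ 4 +
      (2:S) * (ι x) ^ 4 * (ι y) ^ 2 * (ι z) * (ι b) * Xi ^ 5 * Yi ^ 3 +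
      (ι x) ^ 4 * (ι y) ^ 3 * (ι z) * (ι b) ^ 3 * Xi ^ 4 * Yi ^ 3 +
      (ι x) ^ 5 * (ι z) * (ι b) ^ 2 * Xi ^ 4 * Yi ^ 3 -
      (ι x) ^ 5 * (ι z) * (ι b) ^ 3 * Xi ^ 5 +
      (ι x) ^ 5 * (ι y) ^ 3 * (ι z) * (ι b) ^ 3 * Xi ^ 5 * Yi ^ 3 +
      (ι x) ^ 6 * (ι z) * (ι b) ^ 2 * Xi ^ 5 * Yi ^ 3) * hXi +
    ((4:S) * (ι z) * (ι b) * Xi * Yi +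
      (ι z) * (ι b) ^ 3 +
      (2:S) * (ι y) * (ι z) * Xi ^ 3 +
      (4:S) * (ι y) * (ι z) * (ι b) * Xi * Yi ^ 2 +
      (ι y) * (ι z) * (ι b) ^ 3 * Yi +
      (2:S) * (ι y) ^ 2 * (ι z) * Xi ^ 3 * Yi +
      (2:S) * (ι y) ^ 2 * (ι z) * (ι b) * Xi * Yi ^ 3 +
      (3:S) * (ι y) ^ 2 * (ι z) * (ι b) ^ 2 * Xi ^ 2 +
      (ι y) ^ 2 * (ι z) * (ι b) ^ 3 * Yi ^ 2 +
      (2:S) * (ι y) ^ 3 * (ι z) * Xi ^ 3 * Yi ^ 2 +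
      (2:S) * (ι y) ^ 3 * (ι z) * (ι b) * Xi * Yi ^ 4 +
      (3:S) * (ι y) ^ 3 * (ι z) * (ι b) ^ 2 * Xi ^ 2 * Yi +
      (ι y) ^ 4 * (ι z) * Xi ^ 3 * Yi ^ 3 +
      (2:S) * (ι y) ^ 4 * (ι z) * (ι b) * Xi * Yi ^ 5 +
      (3:S) * (ι y) ^ 4 * (ι z) * (ι b) * Xi ^ 4 +
      (3:S) * (ι y) ^ 4 * (ι z) * (ι b) ^ 2 * Xi ^ 2 * Yi ^ 2 +
      (ι y) ^ 5 * (ι z) * Xi ^ 3 * Yi ^ 4 +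
      (3:S) * (ι y) ^ 5 * (ι z) * (ι b) * Xi ^ 4 * Yi +
      (ι y) ^ 6 * (ι z) * Xi ^ 3 * Yi ^ 5 +
      (ι y) ^ 6 * (ι z) * Xi ^ 6 +
      (3:S) * (ι y) ^ 6 * (ι z) * (ι b) * Xi ^ 4 * Yi ^ 2 +
      (ι y) ^ 7 * (ι z) * Xi ^ 6 * Yi +
      (ι y) ^ 8 * (ι z) * Xi ^ 6 * Yi ^ 2 +
      (2:S) * (ι x) * (ι z) * (ι b) ^ 2 * Yi ^ 3 +
      (2:S) * (ι x) * (ι y) * (ι z) * (ι b) ^ 2 * Yi ^ 4 +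
      (2:S) * (ι x) * (ι y) ^ 2 * (ι z) * (ι b) ^ 2 * Yi ^ 5) * hYi +
    ((ι z) * (ι b) * Xi * Yi +
      (ι y) * (ι z) * Xi ^ 3 +
      (ι y) ^ 2 * (ι z) * (ι b) ^ 2 * Xi ^ 2 +
      (ι y) ^ 4 * (ι z) * (ι b) * Xi ^ 4 +
      (ι x) * (ι z) * (ι b) ^ 2 * Yi ^ 3) * h3

end Aux

set_option maxHeartbeats 1000000 in
set_option synthInstance.maxHeartbeats 1000000 in
/-- **Frobenius on `W₂`-valued local cohomology of `E₈^1, E₈^0` in characteristic 3.**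
Let `b ∈ k`, `A = k[x,y,z]/(−z² + x³ + y⁵ + b x² y³)`, `A' = A[1/(xy)]` and
`ε = z x⁻¹ y⁻¹ ∈ A'`.  Then `τ(ε)³ ≡ V(τ(b·ε))` in `W₂(A')` modulo
`W₂(A[1/x]) + W₂(A[1/y])`. -/
theorem frobenius_witt_local_cohomology_E8_char_three (k : Type) [Field k] [CharP k 3]
    (b : k) (f : MvPolynomial (Fin 3) k)
    (hf : f = -(X 2 ^ 2) + X 0 ^ 3 + X 1 ^ 5 + C b * X 0 ^ 2 * X 1 ^ 3)
    (xA yA zA bA : MvPolynomial (Fin 3) k ⧸ Ideal.span {f})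
    (hx : xA = Ideal.Quotient.mk _ (X 0)) (hy : yA = Ideal.Quotient.mk _ (X 1))
    (hz : zA = Ideal.Quotient.mk _ (X 2)) (hb : bA = Ideal.Quotient.mk _ (C b))
    (ι : (MvPolynomial (Fin 3) k ⧸ Ideal.span {f}) →+* Localization.Away (xA * yA))
    (hι : ι = algebraMap _ _)
    (ux uy : (Localization.Away (xA * yA))ˣ)
    (hux : (ux : Localization.Away (xA * yA)) = ι xA)
    (huy : (uy : Localization.Away (xA * yA)) = ι yA)
    (ε : Localization.Away (xA * yA))
    (hε : ε = ι zA * ↑ux⁻¹ * ↑uy⁻¹) :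
    ∃ u v : WittVector 3 (Localization.Away (xA * yA)),
      (∀ i : ℕ, ∃ (s : MvPolynomial (Fin 3) k ⧸ Ideal.span {f}) (t : ℕ),
        u.coeff i * ι xA ^ t = ι s) ∧
      (∀ i : ℕ, ∃ (s : MvPolynomial (Fin 3) k ⧸ Ideal.span {f}) (t : ℕ),
        v.coeff i * ι yA ^ t = ι s) ∧
      ∀ i < 2, (WittVector.teichmuller 3 ε ^ 3 -
        WittVector.verschiebung (WittVector.teichmuller 3 (ι bA * ε)) - u - v).coeff i = 0 := by
  subst hf hx hy hz hb
  have hfA := Ideal.Quotient.eq_zero_iff_mem.mpr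
    (Ideal.subset_span (Set.mem_singleton (-(X 2 ^ 2) + X 0 ^ 3 + X 1 ^ 5
      + C b * X 0 ^ 2 * X 1 ^ 3 : MvPolynomial (Fin 3) k)))
  have hfS := congrArg ι hfA
  simp only [map_add, map_neg, map_mul, map_pow, map_zero] at hfS
  have h3S := congrArg ι (congrArg (algebraMap k _) (CharP.cast_eq_zero k 3))
  simp only [map_natCast, map_ofNat, map_zero, Nat.cast_ofNat] at h3S
  have hXi := ux.mul_inv
  rw [hux] at hXi
  have hYi := uy.mul_inv
  rw [huy] at hYi
  obtain ⟨u, v, h1, h2, h3'⟩ := main_aux ι _ _ _ _ _ _ hXi hYi hfS h3S ε hε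
  exact ⟨u, v, h1, h2, h3'⟩
end

section
/- Let k be a field of characteristic 2 and n ≥ 2 an integer. Work in the Laurent polynomial ring L = k[X^{±1}, Y^{±1}], and let w = τ((X²Y + X·Y^{2^{n−1}})·X^{−2}Y^{−2}) ∈ W(L) (2-typical Witt vectors). Then there exist u, v ∈ W(L) such that every coefficient of u lies in the subring k[X^{±1}, Y] of L, every coefficient of v lies in the subring k[X, Y^{±1}] of L, and the Witt vector w − V^{n−1}(τ(X^{−1}Y^{−1})) − u − v has vanishing i-th coefficient for every i < n. (This is the computation showing that the pullback of the generating local cohomology class along the α₂-quotient with a D_{2ⁿ}^0 singularity equals V^{n−1} of a generator: with x = X², y = Y², z = X²Y + XY^{2^{n−1}}, one has π*(ε,0,…,0) ≡ V^{n−1}(1/(XY)) in Wₙ modulo Wₙ(B[1/x]) + Wₙ(B[1/y]).) -/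
open MvPolynomial

set_option linter.unusedSectionVars false

namespace WittAux

open WittVector

variable {R : Type*} [CommRing R] {S : Type*} [CommRing S]

/-- shift a Witt vector down by one coefficient -/
noncomputable def sd (z : WittVector 2 R) : WittVector 2 R :=
  WittVector.mk 2 fun i => z.coeff (i + 1)

lemma coeff_sd (z : WittVector 2 R) (i : ℕ) : (sd z).coeff i = z.coeff (i + 1) := by
  simp [sd, WittVector.coeff_mk]

lemma versch_sd (z : WittVector 2 R) (h : z.coeff 0 = 0) : verschiebung (sd z) = z := by
  ext i
  cases i with
  | zero => rw [verschiebung_coeff_zero, h]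
  | succ j => rw [verschiebung_coeff_succ, coeff_sd]

lemma sd_zero : sd (0 : WittVector 2 R) = 0 := by
  ext i; simp [coeff_sd]

lemma gc_zero_apply (z : WittVector 2 R) : ghostComponent 0 z = z.coeff 0 := by
  rw [ghostComponent_apply, wittPolynomial_zero, aeval_X]

noncomputable def TT (g : R) : ℕ → WittVector 2 R
  | 0 => teichmuller 2 (1 + g) - 1
  | (N + 1) => sd (TT g N - teichmuller 2 ((TT g N).coeff 0))

noncomputable def cc (g : R) (N : ℕ) : R := (TT g N).coeff 0

lemma TT_step (g : R) (N : ℕ) :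
    TT g N = teichmuller 2 (cc g N) + verschiebung (TT g (N + 1)) := by
  have h0 : (TT g N - teichmuller 2 ((TT g N).coeff 0)).coeff 0 = 0 := by
    rw [← gc_zero_apply, map_sub, gc_zero_apply, gc_zero_apply, teichmuller_coeff_zero, sub_self]
  have h := versch_sd _ h0
  have h2 : sd (TT g N - teichmuller 2 ((TT g N).coeff 0)) = TT g (N + 1) := rfl
  rw [h2] at h
  rw [cc, h]
  ring

lemma viter_add (i : ℕ) (a b : WittVector 2 R) :
    verschiebung^[i] (a + b) = verschiebung^[i] a + verschiebung^[i] b := by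
  induction i generalizing a b with
  | zero => rfl
  | succ i ih => rw [Function.iterate_succ_apply, Function.iterate_succ_apply,
      Function.iterate_succ_apply, map_add, ih]

lemma TT_expand (g : R) (N : ℕ) :
    teichmuller 2 (1 + g)
      = 1 + (∑ i ∈ Finset.range (N + 1), verschiebung^[i] (teichmuller 2 (cc g i)))
        + verschiebung^[N + 1] (TT g (N + 1)) := by
  induction N with
  | zero =>
      have h := TT_step g 0
      rw [show TT g 0 = teichmuller 2 (1 + g) - 1 from rfl] at h
      simp only [zero_add, Finset.sum_range_one, Function.iterate_zero, id_eq,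
        Function.iterate_one]
      linear_combination h
  | succ N ih =>
      rw [ih, TT_step g (N + 1), viter_add, ← Function.iterate_succ_apply,
        Finset.sum_range_succ _ (N + 1)]
      ring

lemma gh_le (i k : ℕ) (z : WittVector 2 R) :
    ghostComponent (k + i) (verschiebung^[i] z) = (2 : R) ^ i * ghostComponent k z := by
  induction i with
  | zero => simp
  | succ i ih =>
      rw [Function.iterate_succ_apply',
        show k + (i + 1) = (k + i) + 1 from rfl,
        ghostComponent_verschiebung, ih]
      push_cast
      ring

lemma gh_lt (i : ℕ) : ∀ k, k < i → ∀ z : WittVector 2 R,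
    ghostComponent k (verschiebung^[i] z) = 0 := by
  induction i with
  | zero => intro k hk; omega
  | succ i ih =>
      intro k hk z
      rw [Function.iterate_succ_apply']
      cases k with
      | zero => exact ghostComponent_zero_verschiebung _
      | succ j =>
          rw [ghostComponent_verschiebung, ih j (by omega)]
          ring

lemma map_sd (f : R →+* S) (z : WittVector 2 R) : map f (sd z) = sd (map f z) := by
  ext i
  rw [map_coeff, coeff_sd, coeff_sd, map_coeff]

lemma TT_map (f : R →+* S) (g : R) (N : ℕ) : map f (TT g N) = TT (f g) N := by
  induction N with
  | zero =>
      rw [show TT g 0 = teichmuller 2 (1 + g) - 1 from rfl,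
        show TT (f g) 0 = teichmuller 2 (1 + f g) - 1 from rfl,
        map_sub, map_one, map_teichmuller, map_add, map_one]
  | succ N ih =>
      rw [show TT g (N + 1) = sd (TT g N - teichmuller 2 ((TT g N).coeff 0)) from rfl,
        show TT (f g) (N + 1) = sd (TT (f g) N - teichmuller 2 ((TT (f g) N).coeff 0)) from rfl,
        map_sd, map_sub, map_teichmuller, ← map_coeff, ih]

lemma cc_map (f : R →+* S) (g : R) (N : ℕ) : f (cc g N) = cc (f g) N := by
  rw [cc, cc, ← map_coeff, TT_map]

lemma TT_zero_arg (N : ℕ) : TT (0 : R) N = 0 := by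
  induction N with
  | zero =>
      rw [show TT (0 : R) 0 = teichmuller 2 (1 + 0) - 1 from rfl, add_zero]
      simp
  | succ N ih =>
      rw [show TT (0 : R) (N + 1) = sd (TT (0 : R) N - teichmuller 2 ((TT (0 : R) N).coeff 0))
          from rfl, ih]
      simp [sd_zero, teichmuller_zero]

lemma cc_zero_arg (N : ℕ) : cc (0 : R) N = 0 := by
  rw [cc, TT_zero_arg, zero_coeff]

lemma ghost_star (g : R) (N : ℕ) :
    (1 + g) ^ (2 ^ N)
      = 1 + ∑ i ∈ Finset.range (N + 1), (2 : R) ^ i * (cc g i) ^ (2 ^ (N - i)) := by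
  have h := congrArg (ghostComponent N) (TT_expand g N)
  rw [ghostComponent_teichmuller] at h
  rw [map_add, map_add, map_one, map_sum, gh_lt (N + 1) N (by omega)] at h
  have hsum : ∑ i ∈ Finset.range (N + 1),
        ghostComponent N (verschiebung^[i] (teichmuller 2 (cc g i)))
      = ∑ i ∈ Finset.range (N + 1), (2 : R) ^ i * (cc g i) ^ (2 ^ (N - i)) := by
    refine Finset.sum_congr rfl fun i hi => ?_
    have hiN : i ≤ N := Nat.lt_succ_iff.mp (Finset.mem_range.mp hi)
    have h2 := gh_le (R := R) i (N - i) (teichmuller 2 (cc g i))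
    rw [Nat.sub_add_cancel hiN] at h2
    rw [h2, ghostComponent_teichmuller]
  rw [hsum] at h
  simpa using h

lemma cQ_coeff_zero (N : ℕ) : (cc (Polynomial.X : Polynomial ℚ) N).coeff 0 = 0 := by
  have h := cc_map (Polynomial.evalRingHom (0 : ℚ)) (Polynomial.X) N
  simp only [Polynomial.coe_evalRingHom, Polynomial.eval_X, cc_zero_arg] at h
  rw [Polynomial.coeff_zero_eq_eval_zero]
  exact h

lemma cQ_coeff_one (N : ℕ) : (cc (Polynomial.X : Polynomial ℚ) N).coeff 1 = 1 := by
  have h := ghost_star (Polynomial.X : Polynomial ℚ) N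
  have h1 : ((1 + Polynomial.X : Polynomial ℚ) ^ (2 ^ N)).coeff 1
      = (1 + ∑ i ∈ Finset.range (N + 1),
          (2 : Polynomial ℚ) ^ i * (cc (Polynomial.X) i) ^ (2 ^ (N - i))).coeff 1 := by rw [h]
  rw [Polynomial.coeff_one_add_X_pow, Polynomial.coeff_add, Polynomial.finset_sum_coeff,
    Finset.sum_range_succ] at h1
  have hlow : ∑ i ∈ Finset.range N,
      ((2 : Polynomial ℚ) ^ i * (cc (Polynomial.X) i) ^ (2 ^ (N - i))).coeff 1 = 0 := by
    refine Finset.sum_eq_zero fun i hi => ?_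
    have hXd : Polynomial.X ∣ cc (Polynomial.X : Polynomial ℚ) i :=
      Polynomial.X_dvd_iff.mpr (cQ_coeff_zero i)
    have hd2 : (Polynomial.X : Polynomial ℚ) ^ 2
        ∣ (2 : Polynomial ℚ) ^ i * (cc (Polynomial.X) i) ^ (2 ^ (N - i)) := by
      refine Dvd.dvd.mul_left ?_ _
      calc (Polynomial.X : Polynomial ℚ) ^ 2
          ∣ (Polynomial.X : Polynomial ℚ) ^ (2 ^ (N - i)) := by
            refine pow_dvd_pow _ ?_
            have h1le : (1 : ℕ) ≤ N - i := by
              have := Finset.mem_range.mp hi; omega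
            calc (2 : ℕ) = 2 ^ 1 := by norm_num
              _ ≤ 2 ^ (N - i) := Nat.pow_le_pow_right (by norm_num) h1le
        _ ∣ (cc (Polynomial.X : Polynomial ℚ) i) ^ (2 ^ (N - i)) := pow_dvd_pow_of_dvd hXd _
    exact Polynomial.X_pow_dvd_iff.mp hd2 1 (by norm_num)
  rw [hlow] at h1
  rw [Nat.sub_self, pow_zero, pow_one] at h1
  have h2 : ((2 : Polynomial ℚ) ^ N * cc (Polynomial.X) N).coeff 1
      = (2 : ℚ) ^ N * (cc (Polynomial.X) N).coeff 1 := by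
    rw [show ((2 : Polynomial ℚ)) ^ N = Polynomial.C ((2 : ℚ) ^ N) by rw [map_pow, map_ofNat],
      Polynomial.coeff_C_mul]
  rw [h2, Polynomial.coeff_one, Nat.choose_one_right] at h1
  push_cast at h1
  norm_num at h1
  exact h1

lemma cZ_eq (N : ℕ) : ∃ h : Polynomial ℤ,
    cc (Polynomial.X : Polynomial ℤ) N = Polynomial.X + Polynomial.X ^ 2 * h := by
  have hmap : Polynomial.map (Int.castRingHom ℚ) (cc (Polynomial.X : Polynomial ℤ) N)
      = cc (Polynomial.X : Polynomial ℚ) N := by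
    have := cc_map (Polynomial.mapRingHom (Int.castRingHom ℚ)) (Polynomial.X : Polynomial ℤ) N
    simpa using this
  have h0 : (cc (Polynomial.X : Polynomial ℤ) N).coeff 0 = 0 := by
    have := congrArg (fun p => Polynomial.coeff p 0) hmap
    simp only [Polynomial.coeff_map, cQ_coeff_zero, Int.coe_castRingHom] at this
    exact_mod_cast this
  have h1 : (cc (Polynomial.X : Polynomial ℤ) N).coeff 1 = 1 := by
    have := congrArg (fun p => Polynomial.coeff p 1) hmap
    simp only [Polynomial.coeff_map, cQ_coeff_one, Int.coe_castRingHom] at this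
    exact_mod_cast this
  have hdvd : (Polynomial.X : Polynomial ℤ) ^ 2
      ∣ (cc (Polynomial.X : Polynomial ℤ) N - Polynomial.X) := by
    rw [Polynomial.X_pow_dvd_iff]
    intro d hd
    interval_cases d
    · simp [Polynomial.coeff_sub, h0, Polynomial.coeff_X_zero]
    · simp [Polynomial.coeff_sub, h1, Polynomial.coeff_X_one]
  obtain ⟨hq, hhq⟩ := hdvd
  exact ⟨hq, by linear_combination hhq⟩

lemma cc_spec (g : R) (N : ℕ) : ∃ r : R, cc g N = g + g ^ 2 * r := by
  obtain ⟨hq, hhq⟩ := cZ_eq N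
  refine ⟨Polynomial.aeval g hq, ?_⟩
  have h := cc_map ((Polynomial.aeval g).toRingHom : Polynomial ℤ →+* R) (Polynomial.X) N
  simp only [AlgHom.toRingHom_eq_coe, RingHom.coe_coe, Polynomial.aeval_X] at h
  rw [← h, hhq]
  simp [map_add, map_mul, map_pow, Polynomial.aeval_X]

lemma viter_coeff_zero : ∀ (N i : ℕ), i < N → ∀ z : WittVector 2 R,
    (verschiebung^[N] z).coeff i = 0 := by
  intro N
  induction N with
  | zero => omega
  | succ N ih =>
      intro i hi z
      rw [Function.iterate_succ_apply']
      cases i with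
      | zero => exact verschiebung_coeff_zero _
      | succ j => rw [verschiebung_coeff_succ]; exact ih j (by omega) z

lemma map_viter (f : R →+* S) (i : ℕ) (z : WittVector 2 R) :
    map f (verschiebung^[i] z) = verschiebung^[i] (map f z) := by
  induction i generalizing z with
  | zero => rfl
  | succ i ih =>
      rw [Function.iterate_succ_apply', Function.iterate_succ_apply', map_verschiebung, ih]

lemma frob_iter_teich [CharP R 2] (a : R) (i : ℕ) :
    frobenius^[i] (teichmuller 2 a) = teichmuller 2 (a ^ (2 ^ i)) := by
  ext k
  rw [iterate_frobenius_coeff]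
  cases k with
  | zero => rw [teichmuller_coeff_zero, teichmuller_coeff_zero]
  | succ j =>
      rw [teichmuller_coeff_pos 2 _ _ (Nat.succ_pos j),
        teichmuller_coeff_pos 2 _ _ (Nat.succ_pos j), zero_pow (by positivity)]

/-- the subring of elements that become polynomial after multiplying by a power of `ι a` -/
def locSubring {A B : Type*} [CommRing A] [CommRing B] (ι : A →+* B) (a : A) : Subring B where
  carrier := {l | ∃ (s : A) (t : ℕ), l * ι a ^ t = ι s}
  zero_mem' := ⟨0, 0, by simp⟩
  one_mem' := ⟨1, 0, by simp⟩
  add_mem' := by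
    rintro l1 l2 ⟨s1, t1, h1⟩ ⟨s2, t2, h2⟩
    exact ⟨s1 * a ^ t2 + s2 * a ^ t1, t1 + t2, by
      rw [map_add, map_mul, map_mul, map_pow, map_pow, ← h1, ← h2, pow_add]; ring⟩
  mul_mem' := by
    rintro l1 l2 ⟨s1, t1, h1⟩ ⟨s2, t2, h2⟩
    exact ⟨s1 * s2, t1 + t2, by rw [map_mul, ← h1, ← h2, pow_add]; ring⟩
  neg_mem' := by
    rintro l ⟨s, t, h⟩
    exact ⟨-s, t, by rw [map_neg, ← h]; ring⟩

end WittAux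

open WittAux WittVector

set_option maxHeartbeats 1600000 in
/-- **Pullback of the local cohomology class along the `α₂`-quotient with a
`D_{2ⁿ}^0` singularity** (char 2, `x = X²`, `y = Y²`, `z = X²Y + XY^{2^{n−1}}`).
In the Laurent polynomial ring `L = k[X^{±1}, Y^{±1}]` (realized as the localization
of `k[X,Y]` away from `XY`), the Witt vector `w = τ((X²Y + XY^{2^{n−1}})X^{−2}Y^{−2})`
satisfies `w ≡ V^{n−1}(τ(X⁻¹Y⁻¹))` in `Wₙ` modulo `Wₙ(k[X^{±1},Y]) + Wₙ(k[X,Y^{±1}])`. -/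
theorem alpha2_quotient_D2n_pullback (k : Type) [Field k] [CharP k 2] (n : ℕ) (hn : 2 ≤ n)
    (ι : MvPolynomial (Fin 2) k →+*
      Localization.Away ((X 0 : MvPolynomial (Fin 2) k) * X 1))
    (hι : ι = algebraMap _ _)
    (uX uY : (Localization.Away ((X 0 : MvPolynomial (Fin 2) k) * X 1))ˣ)
    (huX : (uX : Localization.Away ((X 0 : MvPolynomial (Fin 2) k) * X 1)) = ι (X 0))
    (huY : (uY : Localization.Away ((X 0 : MvPolynomial (Fin 2) k) * X 1)) = ι (X 1))
    (w : WittVector 2 (Localization.Away ((X 0 : MvPolynomial (Fin 2) k) * X 1)))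
    (hw : w = WittVector.teichmuller 2
      (ι (X 0 ^ 2 * X 1 + X 0 * X 1 ^ 2 ^ (n - 1)) *
        (↑uX⁻¹ : Localization.Away ((X 0 : MvPolynomial (Fin 2) k) * X 1)) ^ 2 *
        (↑uY⁻¹ : Localization.Away ((X 0 : MvPolynomial (Fin 2) k) * X 1)) ^ 2)) :
    ∃ u v : WittVector 2 (Localization.Away ((X 0 : MvPolynomial (Fin 2) k) * X 1)),
      (∀ i : ℕ, ∃ (s : MvPolynomial (Fin 2) k) (t : ℕ),
        u.coeff i * ι (X 0) ^ t = ι s) ∧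
      (∀ i : ℕ, ∃ (s : MvPolynomial (Fin 2) k) (t : ℕ),
        v.coeff i * ι (X 1) ^ t = ι s) ∧
      ∀ i < n, (w - (⇑WittVector.verschiebung)^[n - 1]
        (WittVector.teichmuller 2 ((↑uX⁻¹ * ↑uY⁻¹ : Localization.Away ((X 0 : MvPolynomial (Fin 2) k) * X 1)))) - u - v).coeff i = 0 := by
  classical
  -- characteristic 2 on the localization
  have hXY : (X 0 : MvPolynomial (Fin 2) k) * X 1 ≠ 0 :=
    mul_ne_zero (MvPolynomial.X_ne_zero 0) (MvPolynomial.X_ne_zero 1)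
  have hinj : Function.Injective (algebraMap (MvPolynomial (Fin 2) k)
      (Localization.Away ((X 0 : MvPolynomial (Fin 2) k) * X 1))) :=
    IsLocalization.injective _ (powers_le_nonZeroDivisors_of_noZeroDivisors hXY)
  haveI : CharP (Localization.Away ((X 0 : MvPolynomial (Fin 2) k) * X 1)) 2 :=
    charP_of_injective_ringHom hinj 2
  -- abbreviations
  set x : Localization.Away ((X 0 : MvPolynomial (Fin 2) k) * X 1) := ι (X 0) with hxdef
  set y : Localization.Away ((X 0 : MvPolynomial (Fin 2) k) * X 1) := ι (X 1) with hydef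
  set xi : Localization.Away ((X 0 : MvPolynomial (Fin 2) k) * X 1) :=
    (↑uX⁻¹ : Localization.Away ((X 0 : MvPolynomial (Fin 2) k) * X 1)) with hxidef
  set yi : Localization.Away ((X 0 : MvPolynomial (Fin 2) k) * X 1) :=
    (↑uY⁻¹ : Localization.Away ((X 0 : MvPolynomial (Fin 2) k) * X 1)) with hyidef
  have hxx : xi * x = 1 := by rw [hxidef, ← huX]; exact Units.inv_mul uX
  have hyy : yi * y = 1 := by rw [hyidef, ← huY]; exact Units.inv_mul uY
  have hyyi : ∀ a : ℕ, yi ^ a * y ^ a = 1 := fun a => by rw [← mul_pow, hyy, one_pow]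
  -- numerics
  set m : ℕ := 2 ^ (n - 1) - 2 with hmdef
  have h2n : 2 ≤ 2 ^ (n - 1) := by
    calc (2 : ℕ) = 2 ^ 1 := rfl
      _ ≤ 2 ^ (n - 1) := Nat.pow_le_pow_right (by norm_num) (by omega)
  have hm2 : m + 2 = 2 ^ (n - 1) := by omega
  have hn1 : n - 1 + 1 = n := by omega
  -- the subring B1 = k[X^{±1}, Y]
  set B1 : Subring (Localization.Away ((X 0 : MvPolynomial (Fin 2) k) * X 1)) :=
    locSubring ι (X 0) with hB1def
  have hxB1 : x ∈ B1 := ⟨X 0, 0, by simpa using hxdef⟩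
  have hyB1 : y ∈ B1 := ⟨X 1, 0, by simpa using hydef⟩
  have hxiB1 : xi ∈ B1 := ⟨1, 1, by rw [pow_one, map_one]; exact hxx⟩
  -- the element g
  set g : Localization.Away ((X 0 : MvPolynomial (Fin 2) k) * X 1) := xi * y ^ (m + 1) with hgdef
  have hgB1 : g ∈ B1 := mul_mem hxiB1 (pow_mem hyB1 _)
  set g0 : B1 := (⟨g, hgB1⟩ : B1) with hg0def
  have hg0coe : (g0 : Localization.Away ((X 0 : MvPolynomial (Fin 2) k) * X 1)) = g := rfl
  -- the coefficients c_i, computed inside B1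
  have hcc : ∀ i : ℕ, cc g i = ((cc g0 i : B1) :
      Localization.Away ((X 0 : MvPolynomial (Fin 2) k) * X 1)) :=
    fun i => (cc_map B1.subtype g0 i).symm
  have hspec : ∀ i : ℕ, ∃ r : B1, cc g0 i = g0 + g0 ^ 2 * r := fun i => cc_spec g0 i
  choose r hr using hspec
  have hcL : ∀ i : ℕ, cc g i = g + g ^ 2 * ((r i : B1) :
      Localization.Away ((X 0 : MvPolynomial (Fin 2) k) * X 1)) := by
    intro i
    rw [hcc i, hr i]
    push_cast
    rfl
  -- unit computations
  have E1 : ∀ i : ℕ, i < n - 1 → yi ^ (2 ^ i) * g = xi * y ^ (m + 1 - 2 ^ i) := by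
    intro i hi
    have h2i : 2 ^ i ≤ m + 1 := by
      have hle : 2 ^ i ≤ 2 ^ (n - 2) := Nat.pow_le_pow_right (by norm_num) (by omega)
      have hlt : 2 ^ (n - 2) < 2 ^ (n - 1) := Nat.pow_lt_pow_right (by norm_num) (by omega)
      omega
    have hyb : y ^ (m + 1) = y ^ (2 ^ i) * y ^ (m + 1 - 2 ^ i) := by
      rw [← pow_add]; congr 1; omega
    calc yi ^ (2 ^ i) * g = yi ^ (2 ^ i) * (xi * (y ^ (2 ^ i) * y ^ (m + 1 - 2 ^ i))) := by
          rw [hgdef, hyb]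
      _ = xi * y ^ (m + 1 - 2 ^ i) := by
          linear_combination (xi * y ^ (m + 1 - 2 ^ i)) * hyyi (2 ^ i)
  have E2 : yi ^ (2 ^ (n - 1)) * g = xi * yi := by
    rw [← hm2, hgdef]
    have hsplit : yi ^ (m + 2) = yi ^ (m + 1) * yi := by ring
    rw [hsplit]
    linear_combination (xi * yi) * hyyi (m + 1)
  -- the Teichmüller argument of w
  have hw' : ι (X 0 ^ 2 * X 1 + X 0 * X 1 ^ 2 ^ (n - 1)) * xi ^ 2 * yi ^ 2 = yi * (1 + g) := by
    have hxexp : ι (X 0 ^ 2 * X 1 + X 0 * X 1 ^ 2 ^ (n - 1)) = x ^ 2 * y + x * y ^ (m + 2) := by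
      rw [RingHom.map_add ι, RingHom.map_mul ι, RingHom.map_mul ι, RingHom.map_pow ι,
        RingHom.map_pow ι, ← hm2, ← hxdef, ← hydef]
    rw [hxexp, hgdef]
    linear_combination (yi * (xi * x + 1) + xi * y ^ m * (yi * y) ^ 2) * hxx
      + (yi * (xi * x) ^ 2 + xi * y ^ m * (yi * y)) * hyy
  have hw2 : w = teichmuller 2 yi * teichmuller 2 (1 + g) := by
    rw [hw, hw', map_mul]
  -- expansion of τ(1+g)
  have hstep := TT_expand g (n - 1)
  rw [hn1] at hstep
  -- per-term Frobenius twist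
  have hterm : ∀ i : ℕ, teichmuller 2 yi * verschiebung^[i] (teichmuller 2 (cc g i))
      = verschiebung^[i] (teichmuller 2 (cc g i * yi ^ (2 ^ i))) := by
    intro i
    rw [mul_comm (teichmuller 2 yi) _, iterate_verschiebung_mul_left, frob_iter_teich, ← map_mul]
  have hS : teichmuller 2 yi * (∑ i ∈ Finset.range n, verschiebung^[i] (teichmuller 2 (cc g i)))
      = ∑ i ∈ Finset.range n, verschiebung^[i] (teichmuller 2 (cc g i * yi ^ (2 ^ i))) := by
    rw [Finset.mul_sum]
    exact Finset.sum_congr rfl fun i _ => hterm i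
  -- splitting off the top term of the sum
  have hsum := Finset.sum_range_succ
    (fun i => verschiebung^[i] (teichmuller 2 (cc g i * yi ^ (2 ^ i)))) (n - 1)
  rw [hn1] at hsum
  -- the top coefficient
  set d : Localization.Away ((X 0 : MvPolynomial (Fin 2) k) * X 1) :=
    xi * yi * (g * ((r (n - 1) : B1) :
      Localization.Away ((X 0 : MvPolynomial (Fin 2) k) * X 1))) with hddef
  have htop : cc g (n - 1) * yi ^ (2 ^ (n - 1)) = xi * yi + d := by
    rw [hcL (n - 1), hddef]
    calc (g + g ^ 2 * ((r (n - 1) : B1) : _)) * yi ^ (2 ^ (n - 1))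
        = (yi ^ (2 ^ (n - 1)) * g) * (1 + g * ((r (n - 1) : B1) : _)) := by ring
      _ = xi * yi + xi * yi * (g * ((r (n - 1) : B1) : _)) := by rw [E2]; ring
  have hdB1 : d ∈ B1 := by
    have hd2 : d = (xi * xi * y ^ m * ((r (n - 1) : B1) : _)) * (yi * y) := by
      rw [hddef, hgdef]; ring
    rw [hd2, hyy, mul_one]
    exact mul_mem (mul_mem (mul_mem hxiB1 hxiB1) (pow_mem hyB1 m)) (SetLike.coe_mem _)
  -- splitting the top Teichmüller
  set Z : WittVector 2 (Localization.Away ((X 0 : MvPolynomial (Fin 2) k) * X 1)) :=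
    teichmuller 2 (xi * yi + d) - teichmuller 2 (xi * yi) - teichmuller 2 d with hZdef
  have hZ0 : Z.coeff 0 = 0 := by
    rw [hZdef, ← gc_zero_apply, map_sub, map_sub, gc_zero_apply, gc_zero_apply, gc_zero_apply,
      teichmuller_coeff_zero, teichmuller_coeff_zero, teichmuller_coeff_zero]
    ring
  have hZsplit : teichmuller 2 (xi * yi + d)
      = teichmuller 2 (xi * yi) + teichmuller 2 d + verschiebung (sd Z) := by
    rw [versch_sd Z hZ0, hZdef]
    ring
  -- memberships of the lower coefficients
  have haB1 : ∀ i : ℕ, i < n - 1 → cc g i * yi ^ (2 ^ i) ∈ B1 := by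
    intro i hi
    have ha : cc g i * yi ^ (2 ^ i)
        = (xi * y ^ (m + 1 - 2 ^ i)) * (1 + g * ((r i : B1) : _)) := by
      rw [hcL i, ← E1 i hi]; ring
    rw [ha]
    exact mul_mem (mul_mem hxiB1 (pow_mem hyB1 _))
      (add_mem (one_mem _) (mul_mem hgB1 (SetLike.coe_mem _)))
  -- the B1-valued Witt vector
  set U0 : WittVector 2 B1 :=
    (∑ i ∈ (Finset.range (n - 1)).attach,
      verschiebung^[(i : ℕ)] (teichmuller 2
        (⟨cc g ↑i * yi ^ (2 ^ (i : ℕ)), haB1 ↑i (Finset.mem_range.mp i.2)⟩ : B1)))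
    + verschiebung^[n - 1] (teichmuller 2 (⟨d, hdB1⟩ : B1)) with hU0def
  have hUeq : map B1.subtype U0
      = (∑ i ∈ Finset.range (n - 1), verschiebung^[i] (teichmuller 2 (cc g i * yi ^ (2 ^ i))))
        + verschiebung^[n - 1] (teichmuller 2 d) := by
    rw [hU0def, map_add, map_sum]
    congr 1
    · rw [← Finset.sum_attach (Finset.range (n - 1))
        (fun j => verschiebung^[j] (teichmuller 2 (cc g j * yi ^ (2 ^ j))))]
      refine Finset.sum_congr rfl fun i _ => ?_
      rw [map_viter, map_teichmuller]
      rfl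
    · rw [map_viter, map_teichmuller]
      rfl
  -- the tail
  have htail : teichmuller 2 yi * verschiebung^[n] (TT g n)
      = verschiebung^[n] (TT g n * frobenius^[n] (teichmuller 2 yi)) := by
    rw [mul_comm (teichmuller 2 yi) _, iterate_verschiebung_mul_left]
  have hVV : verschiebung^[n - 1] (verschiebung (sd Z)) = verschiebung^[n] (sd Z) := by
    rw [← Function.iterate_succ_apply, show (n - 1).succ = n from hn1]
  -- the key identity
  have KEY : w = teichmuller 2 yi + map B1.subtype U0
      + verschiebung^[n - 1] (teichmuller 2 (xi * yi))
      + (verschiebung^[n] (sd Z) + verschiebung^[n] (TT g n * frobenius^[n] (teichmuller 2 yi))) := by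
    rw [hw2, hstep, mul_add, mul_add, mul_one, hS, hsum, htop, hZsplit,
      viter_add (n - 1) (teichmuller 2 (xi * yi) + teichmuller 2 d) (verschiebung (sd Z)),
      viter_add (n - 1) (teichmuller 2 (xi * yi)) (teichmuller 2 d),
      hVV, htail, hUeq]
    ring
  refine ⟨map B1.subtype U0, teichmuller 2 yi, ?_, ?_, ?_⟩
  · intro i
    exact (U0.coeff i).2
  · intro i
    cases i with
    | zero =>
        refine ⟨1, 1, ?_⟩
        rw [teichmuller_coeff_zero, pow_one, map_one]
        exact hyy
    | succ j =>
        refine ⟨0, 0, ?_⟩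
        rw [teichmuller_coeff_pos 2 _ _ (Nat.succ_pos j), map_zero, pow_zero]
        ring
  · intro i hi
    have hfin : w - verschiebung^[n - 1] (teichmuller 2 (xi * yi)) - map B1.subtype U0
        - teichmuller 2 yi
        = verschiebung^[n] (sd Z + TT g n * frobenius^[n] (teichmuller 2 yi)) := by
      rw [viter_add]
      linear_combination KEY
    rw [hfin]
    exact viter_coeff_zero n i hi _
end

section
/- Let k be a field of characteristic 2. Work in the Laurent polynomial ring L = k[X^{±1}, Y^{±1}], and let w = τ((X³ + Y⁵)·X^{−2}Y^{−2}) ∈ W(L) (2-typical Witt vectors). Then there exist u, v ∈ W(L) such that every coefficient of u lies in the subring k[X^{±1}, Y] of L, every coefficient of v lies in the subring k[X, Y^{±1}] of L, and the Witt vector w − V³(τ(X^{−1}Y^{−1})) − u − v has vanishing coefficients in degrees 0, 1, 2, and 3. (This is the computation showing that the pullback of the generating local cohomology class along the α₂-quotient with an E₈^0 singularity, given by x = X², y = Y², z = X³ + Y⁵, satisfies π*(ε,0,0,0) ≡ V³(1/(XY)) in W₄ modulo W₄(B[1/x]) + W₄(B[1/y]).) -/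
/-!
Write `L = k[X^{±1}, Y^{±1}]`. Since `(X³ + Y⁵)/(X²Y²) = a + b` with `a = Y³X⁻²` and `b = XY⁻²`,
the class is `τ(a + b)`, which we expand in `W₄` by the universal formula
`τ(c + d) = τc + τd - Vτ(-cd) - V²τ(-(c³d + 2c²d² + cd³)) - V³τ(-(c⁷d + ⋯ + cd⁷))`,
whose correction terms are found by matching ghost components over `ℤ[c, d]`. In characteristic
`2` the `V²`-argument `Y⁷X⁻⁵ + XY⁻³` is split once more by the same formula, and the
`V³`-argument additively. Every monomial obtained in this way has either no negative power of `Y`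
or no negative power of `X`, except `c³d⁵ = X⁻¹Y⁻¹`, which leaves `V³τ(X⁻¹Y⁻¹)`.
-/

open MvPolynomial

namespace WittVector

variable {p : ℕ} [hp : Fact p.Prime] {R : Type*} [CommRing R]

theorem coeff_eq_zero_of_ghostComponent_eq_zero [IsDomain R] [CharZero R] {n : ℕ}
    {x : WittVector p R} (h : ∀ m < n, ghostComponent m x = 0) : ∀ i < n, x.coeff i = 0 := by
  intro i
  induction i using Nat.strong_induction_on with
  | _ i ih =>
    intro hi
    have hg := h i hi
    rw [ghostComponent_apply, aeval_wittPolynomial, Finset.sum_range_succ,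
      Finset.sum_eq_zero fun j hj => ?_, zero_add, Nat.sub_self, pow_zero, pow_one] at hg
    · exact (mul_eq_zero.mp hg).resolve_left
        (pow_ne_zero _ (Nat.cast_ne_zero.mpr hp.out.ne_zero))
    · have hj := Finset.mem_range.mp hj
      rw [ih j hj (hj.trans hi), zero_pow (pow_ne_zero _ hp.out.ne_zero), mul_zero]

theorem truncate_verschiebung_congr {n : ℕ} {x y : WittVector p R}
    (h : truncate n x = truncate n y) :
    truncate (n + 1) (verschiebung x) = truncate (n + 1) (verschiebung y) := by
  refine TruncatedWittVector.ext fun ⟨i, hi⟩ => ?_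
  simp only [coeff_truncate]
  cases i with
  | zero => simp
  | succ i => simpa using congrArg (TruncatedWittVector.coeff ⟨i, by omega⟩) h

theorem truncate_one_eq_iff {x y : WittVector p R} :
    truncate 1 x = truncate 1 y ↔ x.coeff 0 = y.coeff 0 := by
  refine ⟨fun h => by simpa using congrArg (TruncatedWittVector.coeff 0) h, fun h => ?_⟩
  refine TruncatedWittVector.ext fun ⟨i, hi⟩ => ?_
  obtain rfl : i = 0 := by omega
  simpa using h

theorem teichmuller_mem_range_map_subtype {S : Subring R} {r : R} (hr : r ∈ S) :
    teichmuller p r ∈ (map (p := p) S.subtype).range :=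
  ⟨_, map_teichmuller p S.subtype ⟨r, hr⟩⟩

theorem verschiebung_mem_range_map_subtype {S : Subring R} {x : WittVector p R}
    (hx : x ∈ (map S.subtype).range) : verschiebung x ∈ (map S.subtype).range := by
  obtain ⟨y, rfl⟩ := hx
  exact ⟨verschiebung y, map_verschiebung _ y⟩

theorem coeff_mem_of_mem_range_map_subtype {S : Subring R} {x : WittVector p R}
    (hx : x ∈ (map S.subtype).range) (i : ℕ) : x.coeff i ∈ S := by
  obtain ⟨y, rfl⟩ := hx
  rw [map_coeff]
  exact (y.coeff i).2

theorem truncate_two_teichmuller_add (c d : R) :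
    truncate 2 (teichmuller 2 (c + d)) =
      truncate 2 (teichmuller 2 c + teichmuller 2 d - verschiebung (teichmuller 2 (-(c * d)))) := by
  have huniv : ∀ i < 2, (teichmuller 2 (X 0 + X 1) - (teichmuller 2 (X 0) + teichmuller 2 (X 1)
      - verschiebung (teichmuller 2 (-(X 0 * X 1))))
      : WittVector 2 (MvPolynomial (Fin 2) ℤ)).coeff i = 0 :=
    coeff_eq_zero_of_ghostComponent_eq_zero fun n hn => by
      interval_cases n <;> simp [ghostComponent_teichmuller, ghostComponent_verschiebung,
        ghostComponent_zero_verschiebung]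
      ring
  rw [← sub_eq_zero, ← map_sub, ← RingHom.mem_ker, mem_ker_truncate]
  intro i hi
  have h := congrArg (aeval ![c, d]) (huniv i hi)
  rw [← AlgHom.coe_toRingHom, ← map_coeff] at h
  simpa [map_teichmuller, map_verschiebung] using h

theorem truncate_four_teichmuller_add (c d : R) :
    truncate 4 (teichmuller 2 (c + d)) =
      truncate 4 (teichmuller 2 c + teichmuller 2 d - verschiebung (teichmuller 2 (-(c * d)))
        - verschiebung (verschiebung (teichmuller 2 (-(c ^ 3 * d + 2 * c ^ 2 * d ^ 2 + c * d ^ 3))))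
        - verschiebung (verschiebung (verschiebung (teichmuller 2
            (-(c ^ 7 * d + 4 * c ^ 6 * d ^ 2 + 9 * c ^ 5 * d ^ 3 + 12 * c ^ 4 * d ^ 4
              + 9 * c ^ 3 * d ^ 5 + 4 * c ^ 2 * d ^ 6 + c * d ^ 7)))))) := by
  have huniv : ∀ i < 4, (teichmuller 2 (X 0 + X 1) - (teichmuller 2 (X 0) + teichmuller 2 (X 1)
      - verschiebung (teichmuller 2 (-(X 0 * X 1)))
      - verschiebung (verschiebung (teichmuller 2
          (-(X 0 ^ 3 * X 1 + 2 * X 0 ^ 2 * X 1 ^ 2 + X 0 * X 1 ^ 3))))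
      - verschiebung (verschiebung (verschiebung (teichmuller 2
          (-(X 0 ^ 7 * X 1 + 4 * X 0 ^ 6 * X 1 ^ 2 + 9 * X 0 ^ 5 * X 1 ^ 3
            + 12 * X 0 ^ 4 * X 1 ^ 4 + 9 * X 0 ^ 3 * X 1 ^ 5 + 4 * X 0 ^ 2 * X 1 ^ 6
            + X 0 * X 1 ^ 7))))))
      : WittVector 2 (MvPolynomial (Fin 2) ℤ)).coeff i = 0 :=
    coeff_eq_zero_of_ghostComponent_eq_zero fun n hn => by
      interval_cases n <;> simp [ghostComponent_teichmuller, ghostComponent_verschiebung,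
        ghostComponent_zero_verschiebung] <;> ring
  rw [← sub_eq_zero, ← map_sub, ← RingHom.mem_ker, mem_ker_truncate]
  intro i hi
  have h := congrArg (aeval ![c, d]) (huniv i hi)
  rw [← AlgHom.coe_toRingHom, ← map_coeff] at h
  simpa [map_teichmuller, map_verschiebung] using h

theorem truncate_two_teichmuller_add_of_two_eq_zero (h2 : (2 : R) = 0) (c d : R) :
    truncate 2 (teichmuller 2 (c + d)) =
      truncate 2 (teichmuller 2 c + teichmuller 2 d - verschiebung (teichmuller 2 (c * d))) := by
  have e : -(c * d) = c * d := by linear_combination (-(c * d)) * h2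
  rw [truncate_two_teichmuller_add, e]

theorem truncate_four_teichmuller_add_of_two_eq_zero (h2 : (2 : R) = 0) (c d : R) :
    truncate 4 (teichmuller 2 (c + d)) =
      truncate 4 (teichmuller 2 c + teichmuller 2 d - verschiebung (teichmuller 2 (c * d))
        - verschiebung (verschiebung (teichmuller 2 (c ^ 3 * d + c * d ^ 3)))
        - verschiebung (verschiebung (verschiebung (teichmuller 2
            (c ^ 7 * d + c ^ 5 * d ^ 3 + c ^ 3 * d ^ 5 + c * d ^ 7))))) := by
  have e1 : -(c * d) = c * d := by linear_combination (-(c * d)) * h2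
  have e2 : -(c ^ 3 * d + 2 * c ^ 2 * d ^ 2 + c * d ^ 3) = c ^ 3 * d + c * d ^ 3 := by
    linear_combination (-(c ^ 3 * d + c ^ 2 * d ^ 2 + c * d ^ 3)) * h2
  have e3 : -(c ^ 7 * d + 4 * c ^ 6 * d ^ 2 + 9 * c ^ 5 * d ^ 3 + 12 * c ^ 4 * d ^ 4
      + 9 * c ^ 3 * d ^ 5 + 4 * c ^ 2 * d ^ 6 + c * d ^ 7)
      = c ^ 7 * d + c ^ 5 * d ^ 3 + c ^ 3 * d ^ 5 + c * d ^ 7 := by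
    linear_combination (-(c ^ 7 * d + 2 * c ^ 6 * d ^ 2 + 5 * c ^ 5 * d ^ 3
      + 6 * c ^ 4 * d ^ 4 + 5 * c ^ 3 * d ^ 5 + 2 * c ^ 2 * d ^ 6 + c * d ^ 7)) * h2
  rw [truncate_four_teichmuller_add, e1, e2, e3]

end WittVector

section UnitMonomial

variable {M : Type*} [CommMonoid M] (u v : Mˣ)

def unitMonomial (i j : ℤ) : M := ↑(u ^ i * v ^ j)

theorem unitMonomial_mul (i j i' j' : ℤ) :
    unitMonomial u v i j * unitMonomial u v i' j' = unitMonomial u v (i + i') (j + j') := by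
  simp only [unitMonomial, ← Units.val_mul, zpow_add, mul_mul_mul_comm]

theorem unitMonomial_pow (i j : ℤ) (n : ℕ) :
    unitMonomial u v i j ^ n = unitMonomial u v (n * i) (n * j) := by
  rw [unitMonomial, unitMonomial, ← Units.val_pow_eq_pow_val, mul_pow, ← zpow_natCast,
    ← zpow_natCast, ← zpow_mul, ← zpow_mul, mul_comm i, mul_comm j]

theorem unitMonomial_comm (i j : ℤ) : unitMonomial u v i j = unitMonomial v u j i := by
  rw [unitMonomial, unitMonomial, mul_comm]

end UnitMonomial

theorem unitMonomial_mem {M : Type*} [CommRing M] {S : Subring M} {u v : Mˣ}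
    (hu : u ∈ S.toSubmonoid.units) (hv : (v : M) ∈ S) (i : ℤ) {j : ℤ} (hj : 0 ≤ j) :
    unitMonomial u v i j ∈ S := by
  lift j to ℕ using hj
  rw [unitMonomial, Units.val_mul, zpow_natCast, Units.val_pow_eq_pow_val]
  exact mul_mem (Submonoid.val_mem_of_mem_units _ (zpow_mem hu i)) (pow_mem hv j)

namespace RingHom

variable {R L : Type*} [CommRing R] [CommRing L] (f : R →+* L) (x : R)

/-- When `f x` is a unit, this is the image of `R[1/x]` in `L`. -/
def awayRange : Subring L where
  carrier := {r | ∃ (s : R) (t : ℕ), r * f x ^ t = f s}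
  mul_mem' := by
    rintro a b ⟨s, t, hs⟩ ⟨s', t', hs'⟩
    exact ⟨s * s', t + t', by rw [map_mul, ← hs, ← hs', pow_add]; ring⟩
  one_mem' := ⟨1, 0, by simp⟩
  add_mem' := by
    rintro a b ⟨s, t, hs⟩ ⟨s', t', hs'⟩
    exact ⟨s * x ^ t' + s' * x ^ t, t + t', by
      simp only [map_add, map_mul, map_pow, ← hs, ← hs', pow_add]; ring⟩
  zero_mem' := ⟨0, 0, by simp⟩
  neg_mem' := by
    rintro a ⟨s, t, hs⟩
    exact ⟨-s, t, by rw [map_neg, ← hs, neg_mul]⟩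

theorem map_mem_awayRange (s : R) : f s ∈ f.awayRange x := ⟨s, 0, by simp⟩

theorem mem_units_awayRange {u : Lˣ} (hu : (u : L) = f x) :
    u ∈ (f.awayRange x).toSubmonoid.units :=
  ⟨⟨x, 0, by simp [hu]⟩, ⟨1, 1, by simp [← hu]⟩⟩

end RingHom

noncomputable section

namespace E8

open WittVector

variable {L : Type*} [CommRing L] (uX uY : Lˣ)

def awayXPart : WittVector 2 L :=
  teichmuller 2 (unitMonomial uX uY (-2) 3)
    - verschiebung (teichmuller 2 (unitMonomial uX uY (-1) 1))
    - verschiebung (verschiebung (teichmuller 2 (unitMonomial uX uY (-5) 7)))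
    + verschiebung (verschiebung (verschiebung (teichmuller 2 (unitMonomial uX uY (-4) 4))))
    - verschiebung (verschiebung (verschiebung (teichmuller 2 (unitMonomial uX uY (-13) 19))))
    - verschiebung (verschiebung (verschiebung (teichmuller 2 (unitMonomial uX uY (-7) 9))))

def awayYPart : WittVector 2 L :=
  teichmuller 2 (unitMonomial uX uY 1 (-2))
    - verschiebung (verschiebung (teichmuller 2 (unitMonomial uX uY 1 (-3))))
    - verschiebung (verschiebung (verschiebung (teichmuller 2 (unitMonomial uX uY 5 (-11)))))

variable {uX uY}

theorem awayXPart_mem {S : Subring L} (hX : uX ∈ S.toSubmonoid.units) (hY : (uY : L) ∈ S) :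
    awayXPart uX uY ∈ (WittVector.map S.subtype).range := by
  have hτ (i j : ℤ) (hj : 0 ≤ j) :
      teichmuller 2 (unitMonomial uX uY i j) ∈ (WittVector.map S.subtype).range :=
    teichmuller_mem_range_map_subtype (unitMonomial_mem hX hY i hj)
  have hV {x : WittVector 2 L} (hx : x ∈ (WittVector.map S.subtype).range) :
      verschiebung x ∈ (WittVector.map S.subtype).range :=
    verschiebung_mem_range_map_subtype hx
  exact sub_mem (sub_mem (add_mem (sub_mem (sub_mem (hτ _ _ (by norm_num))
    (hV (hτ _ _ (by norm_num)))) (hV (hV (hτ _ _ (by norm_num)))))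
    (hV (hV (hV (hτ _ _ (by norm_num)))))) (hV (hV (hV (hτ _ _ (by norm_num))))))
    (hV (hV (hV (hτ _ _ (by norm_num)))))

theorem awayYPart_mem {S : Subring L} (hX : (uX : L) ∈ S) (hY : uY ∈ S.toSubmonoid.units) :
    awayYPart uX uY ∈ (WittVector.map S.subtype).range := by
  have hτ (i j : ℤ) (hi : 0 ≤ i) :
      teichmuller 2 (unitMonomial uX uY i j) ∈ (WittVector.map S.subtype).range := by
    rw [unitMonomial_comm]
    exact teichmuller_mem_range_map_subtype (unitMonomial_mem hY hX j hi)
  have hV {x : WittVector 2 L} (hx : x ∈ (WittVector.map S.subtype).range) :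
      verschiebung x ∈ (WittVector.map S.subtype).range :=
    verschiebung_mem_range_map_subtype hx
  exact sub_mem (sub_mem (hτ _ _ (by norm_num)) (hV (hV (hτ _ _ (by norm_num)))))
    (hV (hV (hV (hτ _ _ (by norm_num)))))

theorem fraction_eq_unitMonomial_add :
    ((uX : L) ^ 3 + ↑uY ^ 5) * ↑uX⁻¹ ^ 2 * ↑uY⁻¹ ^ 2 =
      unitMonomial uX uY (-2) 3 + unitMonomial uX uY 1 (-2) := by
  have hX : (uX : L) = unitMonomial uX uY 1 0 := by simp [unitMonomial]
  have hY : (uY : L) = unitMonomial uX uY 0 1 := by simp [unitMonomial]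
  have hX' : ((uX⁻¹ : Lˣ) : L) = unitMonomial uX uY (-1) 0 := by simp [unitMonomial]
  have hY' : ((uY⁻¹ : Lˣ) : L) = unitMonomial uX uY 0 (-1) := by simp [unitMonomial]
  simp only [hX, hY, hX', hY', unitMonomial_pow, unitMonomial_mul, add_mul]
  norm_num
  exact add_comm _ _

theorem truncate_four_teichmuller_sub_awayParts (h2 : (2 : L) = 0) :
    truncate 4 (teichmuller 2 (((uX : L) ^ 3 + ↑uY ^ 5) * ↑uX⁻¹ ^ 2 * ↑uY⁻¹ ^ 2)
      - (⇑verschiebung)^[3] (teichmuller 2 (((uX⁻¹ : Lˣ) : L) * ↑uY⁻¹))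
      - awayXPart uX uY - awayYPart uX uY) = 0 := by
  set m := unitMonomial uX uY
  have hz : ((uX⁻¹ : Lˣ) : L) * ↑uY⁻¹ = m (-1) (-1) := by simp [m, unitMonomial]
  have hw := truncate_four_teichmuller_add_of_two_eq_zero h2 (m (-2) 3) (m 1 (-2))
  simp only [unitMonomial_pow, unitMonomial_mul, m] at hw
  norm_num only at hw
  have hV2 : truncate 4 (verschiebung (verschiebung (teichmuller 2 (m (-5) 7 + m 1 (-3))))) =
      truncate 4 (verschiebung (verschiebung (teichmuller 2 (m (-5) 7) + teichmuller 2 (m 1 (-3))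
        - verschiebung (teichmuller 2 (m (-4) 4))))) := by
    have h := truncate_two_teichmuller_add_of_two_eq_zero h2 (m (-5) 7) (m 1 (-3))
    rw [unitMonomial_mul] at h
    norm_num only at h
    exact truncate_verschiebung_congr (truncate_verschiebung_congr h)
  have hV3 : truncate 4 (verschiebung (verschiebung (verschiebung (teichmuller 2
      (m (-13) 19 + m (-7) 9 + m (-1) (-1) + m 5 (-11)))))) =
      truncate 4 (verschiebung (verschiebung (verschiebung (teichmuller 2 (m (-13) 19)
        + teichmuller 2 (m (-7) 9) + teichmuller 2 (m (-1) (-1)) + teichmuller 2 (m 5 (-11)))))) :=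
    truncate_verschiebung_congr (truncate_verschiebung_congr (truncate_verschiebung_congr
      (truncate_one_eq_iff.mpr (by simp only [add_coeff_zero, teichmuller_coeff_zero]))))
  -- `-1 ≠ 1` in `W(L)`, but `V³` only sees the constant coefficient, where `z + z = 0`.
  have hdouble : truncate 4 (verschiebung (verschiebung (verschiebung
      (teichmuller 2 (m (-1) (-1)) + teichmuller 2 (m (-1) (-1)))))) = 0 := by
    rw [← map_zero (truncate 4), ← map_zero verschiebung, ← map_zero verschiebung,
      ← map_zero verschiebung]
    refine truncate_verschiebung_congr (truncate_verschiebung_congr (truncate_verschiebung_congr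
      (truncate_one_eq_iff.mpr ?_)))
    rw [add_coeff_zero, teichmuller_coeff_zero, zero_coeff]
    linear_combination m (-1) (-1) * h2
  rw [fraction_eq_unitMonomial_add, hz, Function.iterate_succ_apply', Function.iterate_succ_apply',
    Function.iterate_one]
  unfold awayXPart awayYPart
  simp only [map_sub, map_add] at hw hV2 hV3 hdouble ⊢
  linear_combination hw - hV2 - hV3 - hdouble

end E8

end

theorem alpha2_quotient_E8_pullback_general (k : Type) [Field k] [CharP k 2]
    (ι : MvPolynomial (Fin 2) k →+*
      Localization.Away ((X 0 : MvPolynomial (Fin 2) k) * X 1))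
    (uX uY : (Localization.Away ((X 0 : MvPolynomial (Fin 2) k) * X 1))ˣ)
    (huX : (uX : Localization.Away ((X 0 : MvPolynomial (Fin 2) k) * X 1)) = ι (X 0))
    (huY : (uY : Localization.Away ((X 0 : MvPolynomial (Fin 2) k) * X 1)) = ι (X 1))
    (w : WittVector 2 (Localization.Away ((X 0 : MvPolynomial (Fin 2) k) * X 1)))
    (hw : w = WittVector.teichmuller 2
      (ι (X 0 ^ 3 + X 1 ^ 5) *
        (↑uX⁻¹ : Localization.Away ((X 0 : MvPolynomial (Fin 2) k) * X 1)) ^ 2 *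
        (↑uY⁻¹ : Localization.Away ((X 0 : MvPolynomial (Fin 2) k) * X 1)) ^ 2)) :
    ∃ u v : WittVector 2 (Localization.Away ((X 0 : MvPolynomial (Fin 2) k) * X 1)),
      (∀ i : ℕ, ∃ (s : MvPolynomial (Fin 2) k) (t : ℕ),
        u.coeff i * ι (X 0) ^ t = ι s) ∧
      (∀ i : ℕ, ∃ (s : MvPolynomial (Fin 2) k) (t : ℕ),
        v.coeff i * ι (X 1) ^ t = ι s) ∧
      ∀ i < 4, (w - (⇑WittVector.verschiebung)^[3]
        (WittVector.teichmuller 2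
          ((↑uX⁻¹ * ↑uY⁻¹ :
            Localization.Away ((X 0 : MvPolynomial (Fin 2) k) * X 1)))) - u - v).coeff i
        = 0 := by
  subst hw
  have h2 : (2 : Localization.Away ((X 0 : MvPolynomial (Fin 2) k) * X 1)) = 0 := by
    have h := congrArg ι (CharTwo.two_eq_zero (R := MvPolynomial (Fin 2) k))
    rwa [map_ofNat, map_zero] at h
  refine ⟨E8.awayXPart uX uY, E8.awayYPart uX uY,
    WittVector.coeff_mem_of_mem_range_map_subtype <| E8.awayXPart_mem
      (ι.mem_units_awayRange _ huX) (huY ▸ ι.map_mem_awayRange _ _),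
    WittVector.coeff_mem_of_mem_range_map_subtype <| E8.awayYPart_mem
      (huX ▸ ι.map_mem_awayRange _ _) (ι.mem_units_awayRange _ huY), ?_⟩
  rw [map_add, map_pow, map_pow, ← huX, ← huY]
  exact (WittVector.mem_ker_truncate 4 _).mp (E8.truncate_four_teichmuller_sub_awayParts h2)

/-- **Pullback of the local cohomology class along the `α₂`-quotient with an `E₈^0`
singularity** (char 2, `x = X²`, `y = Y²`, `z = X³ + Y⁵`).
In the Laurent polynomial ring `L = k[X^{±1}, Y^{±1}]` (realized as the localization
of `k[X,Y]` away from `XY`), the Witt vector `w = τ((X³ + Y⁵)X^{−2}Y^{−2})` satisfies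
`w ≡ V³(τ(X⁻¹Y⁻¹))` in `W₄` modulo `W₄(k[X^{±1},Y]) + W₄(k[X,Y^{±1}])`. -/
theorem alpha2_quotient_E8_pullback (k : Type) [Field k] [CharP k 2]
    (ι : MvPolynomial (Fin 2) k →+*
      Localization.Away ((X 0 : MvPolynomial (Fin 2) k) * X 1))
    (hι : ι = algebraMap _ _)
    (uX uY : (Localization.Away ((X 0 : MvPolynomial (Fin 2) k) * X 1))ˣ)
    (huX : (uX : Localization.Away ((X 0 : MvPolynomial (Fin 2) k) * X 1)) = ι (X 0))
    (huY : (uY : Localization.Away ((X 0 : MvPolynomial (Fin 2) k) * X 1)) = ι (X 1))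
    (w : WittVector 2 (Localization.Away ((X 0 : MvPolynomial (Fin 2) k) * X 1)))
    (hw : w = WittVector.teichmuller 2
      (ι (X 0 ^ 3 + X 1 ^ 5) *
        (↑uX⁻¹ : Localization.Away ((X 0 : MvPolynomial (Fin 2) k) * X 1)) ^ 2 *
        (↑uY⁻¹ : Localization.Away ((X 0 : MvPolynomial (Fin 2) k) * X 1)) ^ 2)) :
    ∃ u v : WittVector 2 (Localization.Away ((X 0 : MvPolynomial (Fin 2) k) * X 1)),
      (∀ i : ℕ, ∃ (s : MvPolynomial (Fin 2) k) (t : ℕ),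
        u.coeff i * ι (X 0) ^ t = ι s) ∧
      (∀ i : ℕ, ∃ (s : MvPolynomial (Fin 2) k) (t : ℕ),
        v.coeff i * ι (X 1) ^ t = ι s) ∧
      ∀ i < 4, (w - (⇑WittVector.verschiebung)^[3]
        (WittVector.teichmuller 2
          ((↑uX⁻¹ * ↑uY⁻¹ :
            Localization.Away ((X 0 : MvPolynomial (Fin 2) k) * X 1)))) - u - v).coeff i
        = 0 :=
  alpha2_quotient_E8_pullback_general k ι uX uY huX huY w hw
end

section
/- Let k be a field of characteristic 3, R = k[Y, Z], q = Z² − Y⁴, and let L = R[1/(Y·q)] be the localization of R at the powers of Y·q. Let w = τ(Z³·q^{−1}·Y^{−3}) ∈ W(L) (3-typical Witt vectors). Then there exist u, v ∈ W(L) such that every coefficient of u lies in the image of R[1/q] in L, every coefficient of v lies in the image of R[1/Y] in L, and the Witt vector w + V(τ(Z·q^{−1}·Y^{−1})) − u − v has vanishing coefficients in degrees 0 and 1. (This is the computation showing that the pullback of the generating local cohomology class along the α₃-quotient with an E₆^0 singularity, given by x = Z² − Y⁴, y = Y³, z = Z³, satisfies π*(ε, 0) ≡ V(−Z/(xY)) in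 W₂ modulo W₂(B[1/x]) + W₂(B[1/y]).) -/
/-!
`τ(a) + V(τ(a'))` has Witt coefficients `(a, a', 0, …)`, and for `p = 3` the degree-one Witt
addition polynomial is `a₁ + b₁ - a₀²b₀ - a₀b₀²`. Writing `y = Y`, `z = Z`, the relation
`y⁴ + q = z²` splits `z³/(qy³)` as `zy/q + z/y³`, and then `w + V(τ(z/(qy)))` agrees in `W₂` with
`(τ(zy/q) + V(τ(zy³/q²))) + (τ(z/y³) + V(τ(z/y⁵)))`, whose first summand only inverts `q` and whose
second only inverts `Y`.
-/

open MvPolynomial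

namespace WittVector

theorem wittAdd_three_one :
    (wittAdd 3 1 : MvPolynomial (Fin 2 × ℕ) ℤ) =
      X (0, 1) + X (1, 1) - X (0, 0) ^ 2 * X (1, 0) - X (0, 0) * X (1, 0) ^ 2 := by
  have wittStructureRat_zero (Φ : MvPolynomial (Fin 2) ℚ) :
      wittStructureRat 3 Φ 0 = bind₁ (fun i => (X (i, 0) : MvPolynomial (Fin 2 × ℕ) ℚ)) Φ := by
    simpa [wittPolynomial_zero, bind₁_X_right, rename_X] using wittStructureRat_prop 3 Φ 0
  apply MvPolynomial.map_injective (Int.castRingHom ℚ) Int.cast_injective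
  rw [wittAdd, map_wittStructureInt]
  apply mul_right_cancel₀
    (b := (C (((3 : ℕ) : ℚ) ^ 1) : MvPolynomial (Fin 2 × ℕ) ℚ)) (by norm_num [C_eq_zero])
  rw [wittStructureRat_rec_aux]
  simp only [Finset.sum_range_one, wittStructureRat_zero, wittPolynomial_one, map_add,
    bind₁_X_right, rename_C, rename_X, map_pow, map_mul, map_sub, MvPolynomial.map_X, pow_zero,
    pow_one]
  push_cast
  ring_nf
  simp only [map_ofNat]
  ring

theorem add_coeff_one_of_three {R : Type*} [CommRing R] (x y : WittVector 3 R) :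
    (x + y).coeff 1 = x.coeff 1 + y.coeff 1
      - x.coeff 0 ^ 2 * y.coeff 0 - x.coeff 0 * y.coeff 0 ^ 2 := by
  rw [add_coeff, wittAdd_three_one]
  simp [peval, Function.uncurry]

section TeichmullerAddVerschiebung

variable {p : ℕ} [Fact p.Prime] {R : Type*} [CommRing R] (a b : R)

theorem teichmuller_add_verschiebung_coeff (n : ℕ) :
    (teichmuller p a + verschiebung (teichmuller p b)).coeff n =
      (teichmuller p a).coeff n + (verschiebung (teichmuller p b)).coeff n := by
  refine coeff_add_of_disjoint (n := n) _ _ fun m => ?_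
  rcases m with _ | m
  · exact Or.inr (verschiebung_coeff_zero _)
  · exact Or.inl (teichmuller_coeff_pos _ _ _ m.succ_pos)

@[simp]
theorem teichmuller_add_verschiebung_coeff_zero :
    (teichmuller p a + verschiebung (teichmuller p b)).coeff 0 = a := by
  simp [teichmuller_add_verschiebung_coeff, teichmuller_coeff_zero, verschiebung_coeff_zero]

@[simp]
theorem teichmuller_add_verschiebung_coeff_one :
    (teichmuller p a + verschiebung (teichmuller p b)).coeff 1 = b := by
  simp [teichmuller_add_verschiebung_coeff, teichmuller_coeff_pos _ _ 1 one_pos,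
    teichmuller_coeff_zero]

theorem teichmuller_add_verschiebung_coeff_add_two (n : ℕ) :
    (teichmuller p a + verschiebung (teichmuller p b)).coeff (n + 2) = 0 := by
  simp [teichmuller_add_verschiebung_coeff, teichmuller_coeff_pos _ _ _ n.succ_pos,
    teichmuller_coeff_pos _ _ _ (n + 1).succ_pos]

theorem teichmuller_add_verschiebung_coeff_mem {S : Type*} [SetLike S R] [ZeroMemClass S R]
    {s : S} (ha : a ∈ s) (hb : b ∈ s) (n : ℕ) :
    (teichmuller p a + verschiebung (teichmuller p b)).coeff n ∈ s := by
  rcases n with _ | _ | n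
  · simpa using ha
  · simpa using hb
  · exact (teichmuller_add_verschiebung_coeff_add_two (p := p) a b n).symm ▸ zero_mem s

end TeichmullerAddVerschiebung

theorem coeff_sub_eq_zero_of_coeff_eq {p : ℕ} [Fact p.Prime] {R : Type*} [CommRing R]
    {x y : WittVector p R} {n : ℕ} (h : ∀ i < n, x.coeff i = y.coeff i) :
    ∀ i < n, (x - y).coeff i = 0 := by
  have htrunc : truncate n x = truncate n y := by
    ext i
    simpa only [coeff_truncate] using h i i.isLt
  refine (mem_ker_truncate n _).mp ?_
  rw [RingHom.mem_ker, map_sub, htrunc, sub_self]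

end WittVector

/-- The image of `R[1/g]` in `L` when `ι : R →+* L` inverts `g`. -/
def awaySubring {R L : Type*} [CommRing R] [CommRing L] (ι : R →+* L) (g : R) : Subring L where
  carrier := {x | ∃ (s : R) (t : ℕ), x * ι g ^ t = ι s}
  zero_mem' := ⟨0, 0, by simp⟩
  one_mem' := ⟨1, 0, by simp⟩
  add_mem' := by
    rintro x y ⟨s₁, t₁, h₁⟩ ⟨s₂, t₂, h₂⟩
    refine ⟨s₁ * g ^ t₂ + s₂ * g ^ t₁, t₁ + t₂, ?_⟩
    simp only [map_add, map_mul, map_pow]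
    linear_combination ι g ^ t₂ * h₁ + ι g ^ t₁ * h₂
  neg_mem' := by
    rintro x ⟨s, t, h⟩
    exact ⟨-s, t, by rw [map_neg]; linear_combination -h⟩
  mul_mem' := by
    rintro x y ⟨s₁, t₁, h₁⟩ ⟨s₂, t₂, h₂⟩
    refine ⟨s₁ * s₂, t₁ + t₂, ?_⟩
    rw [map_mul]
    linear_combination y * ι g ^ t₂ * h₁ + ι s₁ * h₂

namespace awaySubring

variable {R L : Type*} [CommRing R] [CommRing L] (ι : R →+* L) (g : R)

theorem map_mem (s : R) : ι s ∈ awaySubring ι g := ⟨s, 0, by simp⟩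

theorem inv_mem {u : Lˣ} (hu : (u : L) = ι g) : (↑u⁻¹ : L) ∈ awaySubring ι g :=
  ⟨1, 1, by rw [pow_one, ← hu, Units.inv_mul, map_one]⟩

end awaySubring

section E6Identities

variable {L : Type*} [CommRing L] (z : L) (uy uq : Lˣ)

theorem E6_decomposition_coeff_zero (hq : (uq : L) = z ^ 2 - uy ^ 4) :
    z ^ 3 * ↑uq⁻¹ * ↑uy⁻¹ ^ 3 = z * uy * ↑uq⁻¹ + z * ↑uy⁻¹ ^ 3 := by
  have hy := uy.mul_inv
  have hq' := uq.mul_inv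
  rw [hq] at hq'
  grind

/- With `q = z² - y⁴`, the right-hand side is `(zy⁴ - z³)/(q²y) + (zq - z³)/(qy⁵) = -2z/(qy)`. -/
theorem E6_decomposition_coeff_one (h3 : (3 : L) = 0) (hq : (uq : L) = z ^ 2 - uy ^ 4) :
    z * ↑uq⁻¹ * ↑uy⁻¹ = z * uy ^ 3 * ↑uq⁻¹ ^ 2 + z * ↑uy⁻¹ ^ 5
      - (z * uy * ↑uq⁻¹) ^ 2 * (z * ↑uy⁻¹ ^ 3) - (z * uy * ↑uq⁻¹) * (z * ↑uy⁻¹ ^ 3) ^ 2 := by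
  have hy := uy.mul_inv
  have hq' := uq.mul_inv
  rw [hq] at hq'
  grind

open WittVector in
theorem E6_decomposition (h3 : (3 : L) = 0) (hq : (uq : L) = z ^ 2 - uy ^ 4) :
    ∀ i < 2, (teichmuller 3 (z ^ 3 * ↑uq⁻¹ * ↑uy⁻¹ ^ 3 : L)
        + verschiebung (teichmuller 3 (z * ↑uq⁻¹ * ↑uy⁻¹ : L))
        - (teichmuller 3 (z * uy * ↑uq⁻¹ : L)
          + verschiebung (teichmuller 3 (z * uy ^ 3 * ↑uq⁻¹ ^ 2 : L)))
        - (teichmuller 3 (z * ↑uy⁻¹ ^ 3 : L)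
          + verschiebung (teichmuller 3 (z * ↑uy⁻¹ ^ 5 : L)))).coeff i = 0 := by
  rw [sub_sub]
  refine coeff_sub_eq_zero_of_coeff_eq fun i hi => ?_
  interval_cases i
  · rw [teichmuller_add_verschiebung_coeff_zero, add_coeff_zero,
      teichmuller_add_verschiebung_coeff_zero, teichmuller_add_verschiebung_coeff_zero]
    exact E6_decomposition_coeff_zero z uy uq hq
  · rw [teichmuller_add_verschiebung_coeff_one, add_coeff_one_of_three]
    simp only [teichmuller_add_verschiebung_coeff_zero, teichmuller_add_verschiebung_coeff_one]
    exact E6_decomposition_coeff_one z uy uq h3 hq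

end E6Identities

theorem alpha3_quotient_E6_pullback_general (k : Type) [Field k] [CharP k 3]
    (q : MvPolynomial (Fin 2) k) (hq : q = X 1 ^ 2 - X 0 ^ 4)
    (ι : MvPolynomial (Fin 2) k →+*
      Localization.Away ((X 0 : MvPolynomial (Fin 2) k) * q))
    (uY uq : (Localization.Away ((X 0 : MvPolynomial (Fin 2) k) * q))ˣ)
    (huY : (uY : Localization.Away ((X 0 : MvPolynomial (Fin 2) k) * q)) = ι (X 0))
    (huq : (uq : Localization.Away ((X 0 : MvPolynomial (Fin 2) k) * q)) = ι q)
    (w : WittVector 3 (Localization.Away ((X 0 : MvPolynomial (Fin 2) k) * q)))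
    (hw : w = WittVector.teichmuller 3
      (ι (X 1 ^ 3) *
        (↑uq⁻¹ : Localization.Away ((X 0 : MvPolynomial (Fin 2) k) * q)) *
        (↑uY⁻¹ : Localization.Away ((X 0 : MvPolynomial (Fin 2) k) * q)) ^ 3)) :
    ∃ u v : WittVector 3 (Localization.Away ((X 0 : MvPolynomial (Fin 2) k) * q)),
      (∀ i : ℕ, ∃ (s : MvPolynomial (Fin 2) k) (t : ℕ),
        u.coeff i * ι q ^ t = ι s) ∧
      (∀ i : ℕ, ∃ (s : MvPolynomial (Fin 2) k) (t : ℕ),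
        v.coeff i * ι (X 0) ^ t = ι s) ∧
      ∀ i < 2, (w + WittVector.verschiebung
        (WittVector.teichmuller 3
          ((ι (X 1) * ↑uq⁻¹ * ↑uY⁻¹ :
            Localization.Away ((X 0 : MvPolynomial (Fin 2) k) * q)))) - u - v).coeff i
        = 0 := by
  have h3 : (3 : Localization.Away ((X 0 : MvPolynomial (Fin 2) k) * q)) = 0 := by
    exact_mod_cast (map_natCast ι 3).symm.trans (by rw [CharP.cast_eq_zero, map_zero])
  have hq' : (uq : Localization.Away ((X 0 : MvPolynomial (Fin 2) k) * q)) =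
      ι (X 1) ^ 2 - uY ^ 4 := by
    rw [huq, huY, ← map_pow, ← map_pow, ← map_sub, ← hq]
  have hz_q := awaySubring.map_mem ι q (X 1)
  have hz_Y := awaySubring.map_mem ι (X 0) (X 1)
  have hY_q : (uY : Localization.Away ((X 0 : MvPolynomial (Fin 2) k) * q)) ∈ awaySubring ι q :=
    huY ▸ awaySubring.map_mem ι q (X 0)
  have hq_inv := awaySubring.inv_mem ι q huq
  have hY_inv := awaySubring.inv_mem ι (X 0) huY
  rw [hw, map_pow]
  refine ⟨_, _, ?_, ?_, E6_decomposition (ι (X 1)) uY uq h3 hq'⟩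
  · exact WittVector.teichmuller_add_verschiebung_coeff_mem (s := awaySubring ι q) _ _
      (mul_mem (mul_mem hz_q hY_q) hq_inv)
      (mul_mem (mul_mem hz_q (pow_mem hY_q 3)) (pow_mem hq_inv 2))
  · exact WittVector.teichmuller_add_verschiebung_coeff_mem (s := awaySubring ι (X 0)) _ _
      (mul_mem hz_Y (pow_mem hY_inv 3)) (mul_mem hz_Y (pow_mem hY_inv 5))

/-- **Pullback of the local cohomology class along the `α₃`-quotient with an `E₆^0`
singularity** (char 3, `x = Z² − Y⁴`, `y = Y³`, `z = Z³`).
Let `R = k[Y,Z]`, `q = Z² − Y⁴`, `L = R[1/(Yq)]`, and `w = τ(Z³ q⁻¹ Y⁻³) ∈ W(L)`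
(3-typical).  Then `w ≡ −V(τ(Z q⁻¹ Y⁻¹))`, i.e. `w + V(τ(Z q⁻¹ Y⁻¹)) ≡ 0`, in `W₂`
modulo `W₂(R[1/q]) + W₂(R[1/Y])`. -/
theorem alpha3_quotient_E6_pullback (k : Type) [Field k] [CharP k 3]
    (q : MvPolynomial (Fin 2) k) (hq : q = X 1 ^ 2 - X 0 ^ 4)
    (ι : MvPolynomial (Fin 2) k →+*
      Localization.Away ((X 0 : MvPolynomial (Fin 2) k) * q))
    (hι : ι = algebraMap _ _)
    (uY uq : (Localization.Away ((X 0 : MvPolynomial (Fin 2) k) * q))ˣ)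
    (huY : (uY : Localization.Away ((X 0 : MvPolynomial (Fin 2) k) * q)) = ι (X 0))
    (huq : (uq : Localization.Away ((X 0 : MvPolynomial (Fin 2) k) * q)) = ι q)
    (w : WittVector 3 (Localization.Away ((X 0 : MvPolynomial (Fin 2) k) * q)))
    (hw : w = WittVector.teichmuller 3
      (ι (X 1 ^ 3) *
        (↑uq⁻¹ : Localization.Away ((X 0 : MvPolynomial (Fin 2) k) * q)) *
        (↑uY⁻¹ : Localization.Away ((X 0 : MvPolynomial (Fin 2) k) * q)) ^ 3)) :
    ∃ u v : WittVector 3 (Localization.Away ((X 0 : MvPolynomial (Fin 2) k) * q)),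
      (∀ i : ℕ, ∃ (s : MvPolynomial (Fin 2) k) (t : ℕ),
        u.coeff i * ι q ^ t = ι s) ∧
      (∀ i : ℕ, ∃ (s : MvPolynomial (Fin 2) k) (t : ℕ),
        v.coeff i * ι (X 0) ^ t = ι s) ∧
      ∀ i < 2, (w + WittVector.verschiebung
        (WittVector.teichmuller 3
          ((ι (X 1) * ↑uq⁻¹ * ↑uY⁻¹ :
            Localization.Away ((X 0 : MvPolynomial (Fin 2) k) * q)))) - u - v).coeff i
        = 0 :=
  alpha3_quotient_E6_pullback_general k q hq ι uY uq huY huq w hw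
end
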